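/- arXiv:2104.14863 — 6 statements merged into one kernel-verified Lean document; each statement's English description precedes it below -/
import Mathlib

section
/- Let H = (X, E) be a k-uniform hypergraph with multiplicity Δ₂(H) ≤ p, and let G = L(H). If K is a set of pairwise adjacent vertices of G (a clique) with |K| ≥ p·k² + (p−2)·k + 2, then there exists a vertex x ∈ X such that x belongs to every edge of H that is a member of K. -/
/-- In the line graph of a `k`-uniform hypergraph with multiplicity at most `p`,
any clique of size at least `p·k² + (p−2)·k + 2` has a common vertex. -/
theorem big_clique_common_vertex {X : Type*} [DecidableEq X] (k p : ℕ)
    (hk : 2 ≤ k) (hp : 1 ≤ p)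
    (H : Finset (Finset X)) (huniform : ∀ e ∈ H, e.card = k)
    (hpair : ∀ x y : X, x ≠ y → (H.filter (fun e => x ∈ e ∧ y ∈ e)).card ≤ p)
    (K : Finset (Finset X)) (hKH : K ⊆ H)
    (hclique : ∀ e ∈ K, ∀ f ∈ K, e ≠ f → (e ∩ f).Nonempty)
    (hcard : (p : ℤ) * k ^ 2 + ((p : ℤ) - 2) * k + 2 ≤ (K.card : ℤ)) :
    ∃ x : X, ∀ e ∈ K, x ∈ e := by
  by_contra h
  push_neg at h
  have hk' : (2:ℤ) ≤ k := by exact_mod_cast hk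
  have hp' : (1:ℤ) ≤ p := by exact_mod_cast hp
  have hKpos : 0 < K.card := by
    have : (0:ℤ) < K.card := by nlinarith [sq_nonneg ((k:ℤ) - 1), mul_nonneg (sub_nonneg.mpr hp') (sq_nonneg (k:ℤ))]
    exact_mod_cast this
  obtain ⟨e₀, he₀⟩ := Finset.card_pos.mp hKpos
  have he₀k : e₀.card = k := huniform e₀ (hKH he₀)
  -- double counting
  have hsum_eq : ∑ x ∈ e₀, (K.filter (fun g => x ∈ g)).card
      = ∑ g ∈ K, (e₀ ∩ g).card := by
    simp only [Finset.card_filter]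
    rw [Finset.sum_comm]
    refine Finset.sum_congr rfl fun g hg => ?_
    rw [← Finset.filter_mem_eq_inter, Finset.card_filter]
  -- lower bound
  have hlow : K.card - 1 + k ≤ ∑ g ∈ K, (e₀ ∩ g).card := by
    rw [← Finset.sum_erase_add _ _ he₀]
    have h1 : (K.erase e₀).card ≤ ∑ g ∈ K.erase e₀, (e₀ ∩ g).card := by
      calc (K.erase e₀).card = ∑ _g ∈ K.erase e₀, 1 := by simp
        _ ≤ ∑ g ∈ K.erase e₀, (e₀ ∩ g).card :=
          Finset.sum_le_sum fun g hg => Finset.card_pos.mpr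
            (hclique e₀ he₀ g (Finset.mem_of_mem_erase hg)
              (Ne.symm (Finset.ne_of_mem_erase hg)))
    have h2 : (e₀ ∩ e₀).card = k := by rw [Finset.inter_self, he₀k]
    have h3 : (K.erase e₀).card = K.card - 1 := Finset.card_erase_of_mem he₀
    omega
  -- upper bound per vertex
  have hup : ∀ x ∈ e₀, (K.filter (fun g => x ∈ g)).card ≤ k * p := by
    intro x _
    obtain ⟨f, hfK, hxf⟩ := h x
    have hfk : f.card = k := huniform f (hKH hfK)
    have hsub : K.filter (fun g => x ∈ g) ⊆
        f.biUnion (fun y => H.filter (fun e => x ∈ e ∧ y ∈ e)) := by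
      intro g hg
      simp only [Finset.mem_filter] at hg
      obtain ⟨hgK, hxg⟩ := hg
      have hgf : g ≠ f := fun hh => hxf (hh ▸ hxg)
      obtain ⟨y, hy⟩ := hclique g hgK f hfK hgf
      rw [Finset.mem_inter] at hy
      exact Finset.mem_biUnion.mpr ⟨y, hy.2, Finset.mem_filter.mpr ⟨hKH hgK, hxg, hy.1⟩⟩
    calc (K.filter (fun g => x ∈ g)).card
        ≤ (f.biUnion (fun y => H.filter (fun e => x ∈ e ∧ y ∈ e))).card :=
          Finset.card_le_card hsub
      _ ≤ ∑ y ∈ f, (H.filter (fun e => x ∈ e ∧ y ∈ e)).card := Finset.card_biUnion_le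
      _ ≤ ∑ _y ∈ f, p := Finset.sum_le_sum fun y hy =>
          hpair x y (fun hxy => hxf (hxy ▸ hy))
      _ = k * p := by rw [Finset.sum_const, hfk, smul_eq_mul]
  have htot : ∑ x ∈ e₀, (K.filter (fun g => x ∈ g)).card ≤ k * (k * p) := by
    calc ∑ x ∈ e₀, (K.filter (fun g => x ∈ g)).card
        ≤ ∑ _x ∈ e₀, k * p := Finset.sum_le_sum hup
      _ = k * (k * p) := by rw [Finset.sum_const, he₀k, smul_eq_mul]
  have hfinal : K.card - 1 + k ≤ k * (k * p) := by omega
  have hfinal2 : K.card + k ≤ k * (k * p) + 1 := by omega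
  have hfinal' : (K.card : ℤ) + k ≤ k * (k * p) + 1 := by exact_mod_cast hfinal2
  have h0 : (0:ℤ) ≤ ((p:ℤ) - 1) * k := mul_nonneg (by linarith) (by linarith)
  linarith
end

section
/- Let H = (X, E) be a k-uniform hypergraph with Δ₂(H) ≤ p and G = L(H). If K is a maximal clique in G with |K| ≥ p·k² + (p−2)·k + 2 and v is a vertex of G not in K, then v is adjacent to at most p·k vertices of K. -/
/-- In the line graph of a `k`-uniform hypergraph with multiplicity at most `p`,
a vertex outside a maximal clique of size at least `p·k² + (p−2)·k + 2`
is adjacent to at most `p·k` vertices of the clique. -/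
theorem outside_vertex_few_neighbors {X : Type*} [DecidableEq X] (k p : ℕ)
    (hk : 2 ≤ k) (hp : 1 ≤ p)
    (H : Finset (Finset X)) (huniform : ∀ e ∈ H, e.card = k)
    (hpair : ∀ x y : X, x ≠ y → (H.filter (fun e => x ∈ e ∧ y ∈ e)).card ≤ p)
    (K : Finset (Finset X)) (hKH : K ⊆ H)
    (hclique : ∀ e ∈ K, ∀ f ∈ K, e ≠ f → (e ∩ f).Nonempty)
    (hmax : ∀ K' : Finset (Finset X), K' ⊆ H →
      (∀ e ∈ K', ∀ f ∈ K', e ≠ f → (e ∩ f).Nonempty) → K ⊆ K' → K = K')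
    (hcard : (p : ℤ) * k ^ 2 + ((p : ℤ) - 2) * k + 2 ≤ (K.card : ℤ))
    (v : Finset X) (hv : v ∈ H) (hvK : v ∉ K) :
    (K.filter (fun f => v ≠ f ∧ (v ∩ f).Nonempty)).card ≤ p * k := by
  classical
  have hk' : (2:ℤ) ≤ (k:ℤ) := by exact_mod_cast hk
  have hp' : (1:ℤ) ≤ (p:ℤ) := by exact_mod_cast hp
  -- L1 : edges containing x and meeting f (with x ∉ f) number at most p*k
  have L1 : ∀ (x : X) (f : Finset X), f ∈ H → x ∉ f →
      (H.filter (fun g => x ∈ g ∧ (g ∩ f).Nonempty)).card ≤ p * k := by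
    intro x f hf hxf
    have hsub : H.filter (fun g => x ∈ g ∧ (g ∩ f).Nonempty) ⊆
        f.biUnion (fun y => H.filter (fun g => x ∈ g ∧ y ∈ g)) := by
      intro g hg
      simp only [Finset.mem_filter] at hg
      obtain ⟨hgH, hxg, y, hy⟩ := hg
      rw [Finset.mem_inter] at hy
      exact Finset.mem_biUnion.2 ⟨y, hy.2, Finset.mem_filter.2 ⟨hgH, hxg, hy.1⟩⟩
    calc (H.filter (fun g => x ∈ g ∧ (g ∩ f).Nonempty)).card
        ≤ (f.biUnion (fun y => H.filter (fun g => x ∈ g ∧ y ∈ g))).card :=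
          Finset.card_le_card hsub
      _ ≤ ∑ y ∈ f, (H.filter (fun g => x ∈ g ∧ y ∈ g)).card := Finset.card_biUnion_le
      _ ≤ ∑ _y ∈ f, p := Finset.sum_le_sum (fun y hy =>
          hpair x y (fun h => hxf (h ▸ hy)))
      _ = f.card * p := by rw [Finset.sum_const, smul_eq_mul]
      _ = p * k := by rw [huniform f hf, Nat.mul_comm]
  -- K is nonempty
  have hK0 : 0 < K.card := by
    rcases Nat.eq_zero_or_pos K.card with h | h
    · rw [h] at hcard; push_cast at hcard; nlinarith
    · exact h
  obtain ⟨e, he⟩ := Finset.card_pos.1 hK0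
  -- pigeonhole: some x ∈ e lies in many edges of K
  obtain ⟨x, hxe, hxcount⟩ :
      ∃ x ∈ e, (p:ℤ) * k + p - 1 ≤ (((K.erase e).filter (fun f => x ∈ f)).card : ℤ) := by
    by_contra hcon
    push_neg at hcon
    have hcover : K.erase e ⊆ e.biUnion (fun x => (K.erase e).filter (fun f => x ∈ f)) := by
      intro f hf
      have hfK := Finset.mem_of_mem_erase hf
      have hfe : f ≠ e := Finset.ne_of_mem_erase hf
      obtain ⟨y, hy⟩ := hclique e he f hfK (Ne.symm hfe)
      rw [Finset.mem_inter] at hy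
      exact Finset.mem_biUnion.2 ⟨y, hy.1, Finset.mem_filter.2 ⟨hf, hy.2⟩⟩
    have h1 : (K.erase e).card ≤ ∑ y ∈ e, ((K.erase e).filter (fun f => y ∈ f)).card :=
      le_trans (Finset.card_le_card hcover) Finset.card_biUnion_le
    have h2 : ((∑ y ∈ e, ((K.erase e).filter (fun f => y ∈ f)).card : ℕ) : ℤ)
        ≤ ∑ _y ∈ e, ((p:ℤ) * k + p - 2) := by
      push_cast
      refine Finset.sum_le_sum (fun y hy => ?_)
      have := hcon y hy
      linarith
    have h3 : (∑ _y ∈ e, ((p:ℤ) * k + p - 2)) = (k:ℤ) * ((p:ℤ) * k + p - 2) := by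
      rw [Finset.sum_const, huniform e (hKH he)]
      simp [nsmul_eq_mul]
    have h4 : ((K.erase e).card : ℤ) = (K.card : ℤ) - 1 := by
      rw [Finset.card_erase_of_mem he]
      have : 1 ≤ K.card := hK0
      push_cast [Nat.cast_sub this]
      ring
    have h1' : ((K.erase e).card : ℤ) ≤ (k:ℤ) * ((p:ℤ) * k + p - 2) := by
      calc ((K.erase e).card : ℤ) ≤ _ := by exact_mod_cast h1
        _ ≤ _ := h2.trans_eq h3
    rw [h4] at h1'
    nlinarith
  have hxcountK : p * k + 1 ≤ (K.filter (fun f => x ∈ f)).card := by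
    have heq : (K.filter (fun f => x ∈ f)).erase e = (K.erase e).filter (fun f => x ∈ f) := by
      ext g
      simp only [Finset.mem_filter, Finset.mem_erase]
      tauto
    have heK : e ∈ K.filter (fun f => x ∈ f) := Finset.mem_filter.2 ⟨he, hxe⟩
    have hc : ((K.filter (fun f => x ∈ f)).erase e).card
        = (K.filter (fun f => x ∈ f)).card - 1 := Finset.card_erase_of_mem heK
    have hpos : 1 ≤ (K.filter (fun f => x ∈ f)).card := Finset.card_pos.2 ⟨e, heK⟩
    have : (p:ℤ) * k + p - 1 ≤ ((K.filter (fun f => x ∈ f)).card : ℤ) - 1 := by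
      rw [← heq] at hxcount
      calc (p:ℤ) * k + p - 1 ≤ _ := hxcount
        _ = ((K.filter (fun f => x ∈ f)).card : ℤ) - 1 := by
          rw [hc, Nat.cast_sub hpos]; push_cast; ring
    have hZ : (p:ℤ) * k + 1 ≤ ((K.filter (fun f => x ∈ f)).card : ℤ) := by linarith
    exact_mod_cast hZ
  -- every edge of K contains x
  have hxall : ∀ f ∈ K, x ∈ f := by
    intro f hf
    by_contra hxf
    have hsub : K.filter (fun g => x ∈ g) ⊆ H.filter (fun g => x ∈ g ∧ (g ∩ f).Nonempty) := by
      intro g hg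
      simp only [Finset.mem_filter] at hg ⊢
      refine ⟨hKH hg.1, hg.2, ?_⟩
      have hgf : g ≠ f := fun h => hxf (h ▸ hg.2)
      exact hclique g hg.1 f hf hgf
    have h1 := L1 x f (hKH hf) hxf
    have h2 := Finset.card_le_card hsub
    omega
  -- x ∉ v, by maximality
  have hxv : x ∉ v := by
    intro hxv
    have hK' : K = insert v K := by
      apply hmax (insert v K)
      · intro g hg
        rcases Finset.mem_insert.1 hg with h | h
        · exact h ▸ hv
        · exact hKH h
      · intro a ha b hb hab
        rcases Finset.mem_insert.1 ha with ha' | ha' <;>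
          rcases Finset.mem_insert.1 hb with hb' | hb'
        · exact absurd (ha'.trans hb'.symm) hab
        · exact ⟨x, Finset.mem_inter.2 ⟨by rw [ha']; exact hxv, hxall b hb'⟩⟩
        · exact ⟨x, Finset.mem_inter.2 ⟨hxall a ha', by rw [hb']; exact hxv⟩⟩
        · exact hclique a ha' b hb' hab
      · exact Finset.subset_insert v K
    exact hvK (hK' ▸ Finset.mem_insert_self v K)
  -- conclude
  have hsub : K.filter (fun f => v ≠ f ∧ (v ∩ f).Nonempty) ⊆
      H.filter (fun g => x ∈ g ∧ (g ∩ v).Nonempty) := by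
    intro g hg
    simp only [Finset.mem_filter] at hg ⊢
    obtain ⟨hgK, _, y, hy⟩ := hg
    rw [Finset.mem_inter] at hy
    exact ⟨hKH hgK, hxall g hgK, ⟨y, Finset.mem_inter.2 ⟨hy.2, hy.1⟩⟩⟩
  exact le_trans (Finset.card_le_card hsub) (L1 x v hv hxv)
end

section
/- Let G be a graph with no induced (k+1)-claw, in which for every pair of non-adjacent vertices u, v the number of common neighbors of u and v is at most p·k², and suppose every edge of G lies in at least p·k³ + (p−3)·k + 1 triangles. Then every edge of G is contained in a clique of size at least p·k² + (p−2)·k + 2. -/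
/-- If `G` has no induced `(k+1)`-claw, non-adjacent pairs have at most `p·k²` common
neighbors, and every edge lies in at least `p·k³ + (p−3)·k + 1` triangles, then every
edge lies in a clique of size at least `p·k² + (p−2)·k + 2`. -/
theorem edge_in_big_clique {V : Type*} [Fintype V] [DecidableEq V]
    (k p : ℕ) (hk : 2 ≤ k) (hp : 1 ≤ p)
    (G : SimpleGraph V) [DecidableRel G.Adj]
    (hclaw : ¬ ∃ (x : V) (S : Finset V), S.card = k + 1 ∧ (∀ y ∈ S, G.Adj x y) ∧
      (∀ y ∈ S, ∀ z ∈ S, y ≠ z → ¬ G.Adj y z))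
    (hcommon : ∀ u v : V, u ≠ v → ¬ G.Adj u v →
      (Finset.univ.filter (fun w => G.Adj u w ∧ G.Adj v w)).card ≤ p * k ^ 2)
    (htri : ∀ u v : V, G.Adj u v →
      (p : ℤ) * k ^ 3 + ((p : ℤ) - 3) * k + 1 ≤
        ((Finset.univ.filter (fun w => G.Adj u w ∧ G.Adj v w)).card : ℤ)) :
    ∀ u v : V, G.Adj u v → ∃ K : Finset V, G.IsClique (K : Set V) ∧ u ∈ K ∧ v ∈ K ∧
      (p : ℤ) * k ^ 2 + ((p : ℤ) - 2) * k + 2 ≤ (K.card : ℤ) := by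
  classical
  intro u v huv
  have hk0 : 0 < k := by omega
  have h4 : 4 ≤ p * k ^ 2 := by
    have h1 : 1 * 2 ^ 2 ≤ p * k ^ 2 := Nat.mul_le_mul hp (Nat.pow_le_pow_left hk 2)
    norm_num at h1
    exact h1
  have hmn1 : 1 ≤ p * k ^ 2 := by omega
  have hmn2 : 2 ≤ p * k ^ 2 := by omega
  have hpz : (1 : ℤ) ≤ (p : ℤ) := by exact_mod_cast hp
  have hkz : (2 : ℤ) ≤ (k : ℤ) := by exact_mod_cast hk
  have hk2z : (4 : ℤ) ≤ (k : ℤ) ^ 2 := by nlinarith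
  have hm1z : (0 : ℤ) ≤ (p : ℤ) * (k : ℤ) ^ 2 - 1 := by nlinarith
  -- Helper producing the final clique, given an adjacent-pairwise subset of the common
  -- neighborhood of `u` and `v` which is large enough.
  have finish : ∀ S : Finset V,
      (∀ w ∈ S, G.Adj u w ∧ G.Adj v w) →
      (∀ x ∈ S, ∀ y ∈ S, x ≠ y → G.Adj x y) →
      (p : ℤ) * k ^ 2 + ((p : ℤ) - 2) * k ≤ (S.card : ℤ) →
      ∃ K : Finset V, G.IsClique (K : Set V) ∧ u ∈ K ∧ v ∈ K ∧
        (p : ℤ) * k ^ 2 + ((p : ℤ) - 2) * k + 2 ≤ (K.card : ℤ) := by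
    intro S hSD hScl hcard
    have hvS : v ∉ S := fun hv => G.irrefl ((hSD v hv).2)
    have huS : u ∉ S := fun hu => G.irrefl ((hSD u hu).1)
    have huvne : u ≠ v := G.ne_of_adj huv
    refine ⟨insert u (insert v S), ?_, by simp, by simp, ?_⟩
    · rw [SimpleGraph.isClique_iff]
      intro a ha b hb hab
      simp only [Finset.coe_insert, Set.mem_insert_iff, Finset.mem_coe] at ha hb
      rcases ha with rfl | rfl | ha
      · rcases hb with rfl | rfl | hb
        · exact absurd rfl hab
        · exact huv
        · exact (hSD _ hb).1
      · rcases hb with rfl | rfl | hb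
        · exact huv.symm
        · exact absurd rfl hab
        · exact (hSD _ hb).2
      · rcases hb with rfl | rfl | hb
        · exact ((hSD _ ha).1).symm
        · exact ((hSD _ ha).2).symm
        · exact hScl _ ha _ hb hab
    · have h1 : u ∉ insert v S := by simp [Finset.mem_insert, huvne, huS]
      rw [Finset.card_insert_of_notMem h1, Finset.card_insert_of_notMem hvS]
      push_cast
      linarith
  -- The main recursion.
  have main : ∀ (d : ℕ) (ys S : Finset V),
      (∀ y ∈ ys, G.Adj u y) →
      (∀ y ∈ ys, ∀ z ∈ ys, y ≠ z → ¬ G.Adj y z) →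
      ys.card + d + 1 = k →
      (∀ w : V, w ∈ S ↔ (G.Adj u w ∧ G.Adj v w ∧ w ∉ ys ∧ ∀ z ∈ ys, ¬ G.Adj z w)) →
      (p : ℤ) * k ^ 3 + ((p : ℤ) - 3) * k + 1
          - (ys.card : ℤ) * ((p : ℤ) * k ^ 2 - 1) ≤ (S.card : ℤ) →
      ∃ K : Finset V, G.IsClique (K : Set V) ∧ u ∈ K ∧ v ∈ K ∧
        (p : ℤ) * k ^ 2 + ((p : ℤ) - 2) * k + 2 ≤ (K.card : ℤ) := by
    intro d
    induction d with
    | zero =>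
      intro ys S hysu hyspair hcard hSmem hScard
      by_cases hcl : ∀ x ∈ S, ∀ y ∈ S, x ≠ y → G.Adj x y
      · refine finish S (fun w hw => ⟨((hSmem w).mp hw).1, ((hSmem w).mp hw).2.1⟩) hcl ?_
        have h1 : ys.card + 1 ≤ k := by omega
        have h2 : ((ys.card + 1 : ℕ) : ℤ) ≤ (k : ℤ) := Nat.cast_le.mpr h1
        push_cast at h2
        have key : (0 : ℤ) ≤ ((k : ℤ) - 1 - (ys.card : ℤ)) * ((p : ℤ) * (k : ℤ) ^ 2 - 1) :=
          mul_nonneg (by linarith) hm1z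
        nlinarith [hScard, key]
      · push_neg at hcl
        obtain ⟨y, hyS, y', hy'S, hne, hnadj⟩ := hcl
        obtain ⟨huy, hvy, hyys, hyz⟩ := (hSmem y).mp hyS
        obtain ⟨huy', hvy', hy'ys, hy'z⟩ := (hSmem y').mp hy'S
        exfalso
        apply hclaw
        refine ⟨u, insert y (insert y' ys), ?_, ?_, ?_⟩
        · have hy2 : y ∉ insert y' ys := by
            simp only [Finset.mem_insert]
            push_neg
            exact ⟨hne, hyys⟩
          rw [Finset.card_insert_of_notMem hy2, Finset.card_insert_of_notMem hy'ys]
          omega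
        · intro w hw
          simp only [Finset.mem_insert] at hw
          rcases hw with rfl | rfl | hw2
          · exact huy
          · exact huy'
          · exact hysu w hw2
        · intro a ha b hb hab
          simp only [Finset.mem_insert] at ha hb
          rcases ha with rfl | rfl | ha2
          · rcases hb with rfl | rfl | hb2
            · exact absurd rfl hab
            · exact hnadj
            · exact fun h => (hyz b hb2) h.symm
          · rcases hb with rfl | rfl | hb2
            · exact fun h => hnadj h.symm
            · exact absurd rfl hab
            · exact fun h => (hy'z b hb2) h.symm
          · rcases hb with rfl | rfl | hb2
            · exact hyz a ha2
            · exact hy'z a ha2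
            · exact hyspair a ha2 b hb2 hab
    | succ d ih =>
      intro ys S hysu hyspair hcard hSmem hScard
      by_cases hcl : ∀ x ∈ S, ∀ y ∈ S, x ≠ y → G.Adj x y
      · refine finish S (fun w hw => ⟨((hSmem w).mp hw).1, ((hSmem w).mp hw).2.1⟩) hcl ?_
        have h1 : ys.card + 1 ≤ k := by omega
        have h2 : ((ys.card + 1 : ℕ) : ℤ) ≤ (k : ℤ) := Nat.cast_le.mpr h1
        push_cast at h2
        have key : (0 : ℤ) ≤ ((k : ℤ) - 1 - (ys.card : ℤ)) * ((p : ℤ) * (k : ℤ) ^ 2 - 1) :=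
          mul_nonneg (by linarith) hm1z
        nlinarith [hScard, key]
      · push_neg at hcl
        obtain ⟨y, hyS, y', hy'S, hne, hnadj⟩ := hcl
        obtain ⟨huy, hvy, hyys, hyz⟩ := (hSmem y).mp hyS
        obtain ⟨huy', hvy', hy'ys, hy'z⟩ := (hSmem y').mp hy'S
        by_cases hext : ∃ e : V, G.Adj u e ∧ ¬ G.Adj v e ∧ e ≠ v ∧ e ∉ ys ∧
            ∀ z ∈ ys, ¬ G.Adj z e
        · -- Case (ii) : an "external" vertex is available.
          obtain ⟨e, hue, hve, hev, heys, hez⟩ := hext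
          set S' := Finset.univ.filter (fun w => G.Adj u w ∧ G.Adj v w ∧ w ∉ insert e ys ∧
            ∀ z ∈ insert e ys, ¬ G.Adj z w) with hS'def
          have hS'mem : ∀ w : V, w ∈ S' ↔ (G.Adj u w ∧ G.Adj v w ∧ w ∉ insert e ys ∧
              ∀ z ∈ insert e ys, ¬ G.Adj z w) := by
            intro w
            rw [hS'def]
            simp only [Finset.mem_filter, Finset.mem_univ, true_and]
          have hXmem : u ∈ Finset.univ.filter (fun w => G.Adj e w ∧ G.Adj v w) := by
            simp only [Finset.mem_filter, Finset.mem_univ, true_and]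
            exact ⟨hue.symm, huv.symm⟩
          have hXcard : (Finset.univ.filter (fun w => G.Adj e w ∧ G.Adj v w)).card ≤
              p * k ^ 2 := hcommon e v hev (fun h => hve h.symm)
          have hXcard' :
              ((Finset.univ.filter (fun w => G.Adj e w ∧ G.Adj v w)).erase u).card ≤
              p * k ^ 2 - 1 := by
            rw [Finset.card_erase_of_mem hXmem]
            exact Nat.sub_le_sub_right hXcard 1
          have hsub : S ⊆ S' ∪ ((Finset.univ.filter (fun w => G.Adj e w ∧ G.Adj v w)).erase u) := by
            intro w hw
            obtain ⟨h1, h2, h3, h44⟩ := (hSmem w).mp hw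
            by_cases hew : G.Adj e w
            · refine Finset.mem_union_right _ (Finset.mem_erase.mpr ⟨?_, ?_⟩)
              · exact fun h => G.irrefl (h ▸ h1)
              · simp only [Finset.mem_filter, Finset.mem_univ, true_and]
                exact ⟨hew, h2⟩
            · refine Finset.mem_union_left _ ((hS'mem w).mpr ⟨h1, h2, ?_, ?_⟩)
              · simp only [Finset.mem_insert]
                push_neg
                refine ⟨?_, h3⟩
                rintro rfl
                exact hve h2
              · intro z hz
                rcases Finset.mem_insert.mp hz with rfl | hz
                · exact hew
                · exact h44 z hz
          have hScard' : S.card ≤ S'.card + (p * k ^ 2 - 1) := by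
            calc S.card ≤ (S' ∪ ((Finset.univ.filter
                    (fun w => G.Adj e w ∧ G.Adj v w)).erase u)).card :=
                  Finset.card_le_card hsub
              _ ≤ S'.card + ((Finset.univ.filter
                    (fun w => G.Adj e w ∧ G.Adj v w)).erase u).card :=
                  Finset.card_union_le _ _
              _ ≤ S'.card + (p * k ^ 2 - 1) := Nat.add_le_add_left hXcard' _
          refine ih (insert e ys) S' ?_ ?_ ?_ hS'mem ?_
          · intro z hz
            rcases Finset.mem_insert.mp hz with rfl | hz2
            · exact hue
            · exact hysu z hz2
          · intro a ha b hb hab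
            simp only [Finset.mem_insert] at ha hb
            rcases ha with rfl | ha2
            · rcases hb with rfl | hb2
              · exact absurd rfl hab
              · exact fun h => (hez b hb2) h.symm
            · rcases hb with rfl | hb2
              · exact hez a ha2
              · exact hyspair a ha2 b hb2 hab
          · rw [Finset.card_insert_of_notMem heys]
            omega
          · rw [Finset.card_insert_of_notMem heys]
            have hcast := (Nat.cast_le (α := ℤ)).mpr hScard'
            push_cast [Nat.cast_sub hmn1] at hcast
            push_cast
            linarith [hScard, hcast]
        · -- Case (iii) : no external vertex; use the triangle hypothesis on the edge (u, y').
          push_neg at hext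
          set S' := Finset.univ.filter (fun w => G.Adj u w ∧ G.Adj v w ∧ w ∉ insert y ys ∧
            ∀ z ∈ insert y ys, ¬ G.Adj z w) with hS'def
          have hS'mem : ∀ w : V, w ∈ S' ↔ (G.Adj u w ∧ G.Adj v w ∧ w ∉ insert y ys ∧
              ∀ z ∈ insert y ys, ¬ G.Adj z w) := by
            intro w
            rw [hS'def]
            simp only [Finset.mem_filter, Finset.mem_univ, true_and]
          set E := Finset.univ.filter (fun w => G.Adj u w ∧ G.Adj y' w) with hEdef
          have hE : (p : ℤ) * k ^ 3 + ((p : ℤ) - 3) * k + 1 ≤ (E.card : ℤ) := by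
            have := htri u y' huy'
            rw [← hEdef] at this
            exact this
          set U1 := ys.biUnion (fun z =>
            (Finset.univ.filter (fun w => G.Adj z w ∧ G.Adj y' w)).erase u) with hU1def
          set A := S.filter (fun w => G.Adj y' w) with hAdef
          have hEB : E ⊆ insert v (U1 ∪ A) := by
            intro w hw
            rw [hEdef] at hw
            simp only [Finset.mem_filter, Finset.mem_univ, true_and] at hw
            obtain ⟨huw, hy'w⟩ := hw
            by_cases hwv : w = v
            · rw [hwv]
              exact Finset.mem_insert_self _ _
            by_cases hz : ∃ z ∈ ys, G.Adj z w
            · obtain ⟨z, hzys, hzw⟩ := hz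
              refine Finset.mem_insert_of_mem (Finset.mem_union_left _ ?_)
              rw [hU1def]
              refine Finset.mem_biUnion.mpr ⟨z, hzys, Finset.mem_erase.mpr ⟨?_, ?_⟩⟩
              · exact fun h => G.irrefl (h ▸ huw)
              · simp only [Finset.mem_filter, Finset.mem_univ, true_and]
                exact ⟨hzw, hy'w⟩
            · push_neg at hz
              have hwys : w ∉ ys := fun hwys => (hy'z w hwys) hy'w.symm
              have hvw : G.Adj v w := by
                by_contra hvw
                obtain ⟨z, hzys, hzw⟩ := hext w huw hvw hwv hwys
                exact hz z hzys hzw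
              refine Finset.mem_insert_of_mem (Finset.mem_union_right _ ?_)
              rw [hAdef]
              exact Finset.mem_filter.mpr ⟨(hSmem w).mpr ⟨huw, hvw, hwys, hz⟩, hy'w⟩
          have hU1card : U1.card ≤ ys.card * (p * k ^ 2 - 1) := by
            rw [hU1def]
            apply Finset.card_biUnion_le_card_mul
            intro z hz
            have hzy' : z ≠ y' := fun h => hy'ys (h ▸ hz)
            have hnz : ¬ G.Adj z y' := hy'z z hz
            have humem : u ∈ Finset.univ.filter (fun w => G.Adj z w ∧ G.Adj y' w) := by
              simp only [Finset.mem_filter, Finset.mem_univ, true_and]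
              exact ⟨(hysu z hz).symm, huy'.symm⟩
            rw [Finset.card_erase_of_mem humem]
            exact Nat.sub_le_sub_right (hcommon z y' hzy' hnz) 1
          have hy'S' : y' ∈ S' := by
            refine (hS'mem y').mpr ⟨huy', hvy', ?_, ?_⟩
            · simp only [Finset.mem_insert]
              push_neg
              exact ⟨hne.symm, hy'ys⟩
            · intro z hz
              rcases Finset.mem_insert.mp hz with rfl | hz
              · exact hnadj
              · exact hy'z z hz
          have hS'pos : 0 < S'.card := Finset.card_pos.mpr ⟨y', hy'S'⟩
          have hAsub : A ⊆ (((Finset.univ.filter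
              (fun w => G.Adj y w ∧ G.Adj y' w)).erase u).erase v) ∪
              insert y (S'.erase y') := by
            intro w hw
            rw [hAdef] at hw
            obtain ⟨hwS, hy'w⟩ := Finset.mem_filter.mp hw
            obtain ⟨h1, h2, h3, h44⟩ := (hSmem w).mp hwS
            by_cases hwy : w = y
            · refine Finset.mem_union_right _ ?_
              rw [hwy]
              exact Finset.mem_insert_self _ _
            by_cases hyw : G.Adj y w
            · refine Finset.mem_union_left _ ?_
              refine Finset.mem_erase.mpr ⟨fun h => G.irrefl (h ▸ h2), ?_⟩
              refine Finset.mem_erase.mpr ⟨fun h => G.irrefl (h ▸ h1), ?_⟩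
              simp only [Finset.mem_filter, Finset.mem_univ, true_and]
              exact ⟨hyw, hy'w⟩
            · refine Finset.mem_union_right _ (Finset.mem_insert_of_mem ?_)
              refine Finset.mem_erase.mpr ⟨fun h => G.irrefl (h ▸ hy'w), ?_⟩
              refine (hS'mem w).mpr ⟨h1, h2, ?_, ?_⟩
              · simp only [Finset.mem_insert]
                push_neg
                exact ⟨hwy, h3⟩
              · intro z hz
                rcases Finset.mem_insert.mp hz with rfl | hz
                · exact hyw
                · exact h44 z hz
          have hC2card : ((((Finset.univ.filter
              (fun w => G.Adj y w ∧ G.Adj y' w)).erase u).erase v)).card ≤ p * k ^ 2 - 2 := by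
            have humem : u ∈ Finset.univ.filter (fun w => G.Adj y w ∧ G.Adj y' w) := by
              simp only [Finset.mem_filter, Finset.mem_univ, true_and]
              exact ⟨huy.symm, huy'.symm⟩
            have hvmem : v ∈ (Finset.univ.filter
                (fun w => G.Adj y w ∧ G.Adj y' w)).erase u := by
              refine Finset.mem_erase.mpr ⟨(G.ne_of_adj huv).symm, ?_⟩
              simp only [Finset.mem_filter, Finset.mem_univ, true_and]
              exact ⟨hvy.symm, hvy'.symm⟩
            rw [Finset.card_erase_of_mem hvmem, Finset.card_erase_of_mem humem]
            have := hcommon y y' hne hnadj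
            omega
          have h5 : (insert y (S'.erase y')).card ≤ S'.card := by
            calc (insert y (S'.erase y')).card ≤ (S'.erase y').card + 1 :=
                Finset.card_insert_le _ _
              _ = (S'.card - 1) + 1 := by rw [Finset.card_erase_of_mem hy'S']
              _ = S'.card := by omega
          have hAcard : A.card ≤ (p * k ^ 2 - 2) + S'.card :=
            le_trans (Finset.card_le_card hAsub)
              (le_trans (Finset.card_union_le _ _) (Nat.add_le_add hC2card h5))
          have hEcard : E.card ≤ 1 + (ys.card * (p * k ^ 2 - 1) + ((p * k ^ 2 - 2) + S'.card)) := by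
            calc E.card ≤ (insert v (U1 ∪ A)).card := Finset.card_le_card hEB
              _ ≤ (U1 ∪ A).card + 1 := Finset.card_insert_le _ _
              _ ≤ (U1.card + A.card) + 1 := Nat.add_le_add_right (Finset.card_union_le _ _) 1
              _ ≤ (ys.card * (p * k ^ 2 - 1) + ((p * k ^ 2 - 2) + S'.card)) + 1 :=
                Nat.add_le_add_right (Nat.add_le_add hU1card hAcard) 1
              _ = 1 + (ys.card * (p * k ^ 2 - 1) + ((p * k ^ 2 - 2) + S'.card)) :=
                Nat.add_comm _ 1
          have hEcardZ := (Nat.cast_le (α := ℤ)).mpr hEcard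
          push_cast [Nat.cast_sub hmn1, Nat.cast_sub hmn2] at hEcardZ
          refine ih (insert y ys) S' ?_ ?_ ?_ hS'mem ?_
          · intro z hz
            rcases Finset.mem_insert.mp hz with rfl | hz2
            · exact huy
            · exact hysu z hz2
          · intro a ha b hb hab
            simp only [Finset.mem_insert] at ha hb
            rcases ha with rfl | ha2
            · rcases hb with rfl | hb2
              · exact absurd rfl hab
              · exact fun h => (hyz b hb2) h.symm
            · rcases hb with rfl | hb2
              · exact hyz a ha2
              · exact hyspair a ha2 b hb2 hab
          · rw [Finset.card_insert_of_notMem hyys]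
            omega
          · rw [Finset.card_insert_of_notMem hyys]
            push_cast
            linarith [hE, hEcardZ]
  -- Conclude by applying the recursion with no forbidden vertices.
  have h0 : ∀ w : V, w ∈ (Finset.univ.filter (fun w => G.Adj u w ∧ G.Adj v w)) ↔
      (G.Adj u w ∧ G.Adj v w ∧ w ∉ (∅ : Finset V) ∧ ∀ z ∈ (∅ : Finset V), ¬ G.Adj z w) := by
    intro w
    simp [Finset.mem_filter]
  refine main (k - 1) ∅ (Finset.univ.filter (fun w => G.Adj u w ∧ G.Adj v w))
    (by simp) (by simp) (by simp; omega) h0 ?_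
  simpa using htri u v huv
end

section
/- Let G be a graph with no induced (k+1)-claw and let 𝒦 be the set of maximal cliques of G of size at least p·k² + (p−2)·k + 2. Suppose additionally that any vertex x outside a clique K ∈ 𝒦 is adjacent to at most p·k vertices of K, and that any two distinct cliques in 𝒦 share at most p vertices. Then every vertex of G belongs to at most k members of 𝒦. -/
/-- If `G` has no induced `(k+1)`-claw, any vertex outside a big maximal clique is
adjacent to at most `p·k` of its vertices, and distinct big maximal cliques share at
most `p` vertices, then every vertex lies in at most `k` big maximal cliques
(those of size at least `p·k² + (p−2)·k + 2`). -/
theorem vertex_in_few_big_cliques {V : Type*} [Fintype V] [DecidableEq V]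
    (k p : ℕ) (hk : 2 ≤ k) (hp : 1 ≤ p)
    (G : SimpleGraph V) [DecidableRel G.Adj]
    (hclaw : ¬ ∃ (x : V) (S : Finset V), S.card = k + 1 ∧ (∀ y ∈ S, G.Adj x y) ∧
      (∀ y ∈ S, ∀ z ∈ S, y ≠ z → ¬ G.Adj y z))
    -- 𝒦 is the set of maximal cliques of size at least p·k² + (p−2)·k + 2
    (hjoin : ∀ K : Finset V, G.IsClique (K : Set V) →
      (∀ K' : Finset V, G.IsClique (K' : Set V) → K ⊆ K' → K = K') →
      (p : ℤ) * k ^ 2 + ((p : ℤ) - 2) * k + 2 ≤ (K.card : ℤ) →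
      ∀ x : V, x ∉ K → (K.filter (fun y => G.Adj x y)).card ≤ p * k)
    (hinter : ∀ K₁ K₂ : Finset V, G.IsClique (K₁ : Set V) → G.IsClique (K₂ : Set V) →
      (∀ K' : Finset V, G.IsClique (K' : Set V) → K₁ ⊆ K' → K₁ = K') →
      (∀ K' : Finset V, G.IsClique (K' : Set V) → K₂ ⊆ K' → K₂ = K') →
      (p : ℤ) * k ^ 2 + ((p : ℤ) - 2) * k + 2 ≤ (K₁.card : ℤ) →
      (p : ℤ) * k ^ 2 + ((p : ℤ) - 2) * k + 2 ≤ (K₂.card : ℤ) →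
      K₁ ≠ K₂ → (K₁ ∩ K₂).card ≤ p) :
    ∀ x : V,
      {K : Finset V | G.IsClique (K : Set V) ∧
        (∀ K' : Finset V, G.IsClique (K' : Set V) → K ⊆ K' → K = K') ∧
        (p : ℤ) * k ^ 2 + ((p : ℤ) - 2) * k + 2 ≤ (K.card : ℤ) ∧
        x ∈ K}.ncard ≤ k := by
  classical
  intro x
  by_contra hcon
  push_neg at hcon
  obtain ⟨t, hts, htc⟩ := Set.exists_subset_card_eq (show k + 1 ≤ _ from hcon)
  have htf : t.Finite := Set.toFinite t
  have hcard : htf.toFinset.card = k + 1 := by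
    rw [← Set.ncard_eq_toFinset_card t htf, htc]
  set e := htf.toFinset.equivFin with he
  set K : Fin (k + 1) → Finset V :=
    fun i => (e.symm (Fin.cast hcard.symm i)).1 with hKdef
  have hKmem : ∀ i, K i ∈ t := by
    intro i
    have := (e.symm (Fin.cast hcard.symm i)).2
    rwa [Set.Finite.mem_toFinset] at this
  have hK𝒮 : ∀ i, G.IsClique ((K i : Finset V) : Set V) ∧
      (∀ K' : Finset V, G.IsClique (K' : Set V) → K i ⊆ K' → K i = K') ∧
      (p : ℤ) * k ^ 2 + ((p : ℤ) - 2) * k + 2 ≤ ((K i).card : ℤ) ∧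
      x ∈ K i := fun i => hts (hKmem i)
  have hclique : ∀ i, G.IsClique ((K i : Finset V) : Set V) := fun i => (hK𝒮 i).1
  have hmax : ∀ i, ∀ K' : Finset V, G.IsClique (K' : Set V) → K i ⊆ K' → K i = K' :=
    fun i => (hK𝒮 i).2.1
  have hbig : ∀ i, (p : ℤ) * k ^ 2 + ((p : ℤ) - 2) * k + 2 ≤ ((K i).card : ℤ) :=
    fun i => (hK𝒮 i).2.2.1
  have hxin : ∀ i, x ∈ K i := fun i => (hK𝒮 i).2.2.2
  have hKinj : Function.Injective K := by
    intro i j h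
    have h1 : e.symm (Fin.cast hcard.symm i) = e.symm (Fin.cast hcard.symm j) :=
      Subtype.ext h
    have h2 := e.symm.injective h1
    have h3 : (i : ℕ) = j := by simpa using congrArg Fin.val h2
    exact Fin.ext h3
  -- main inductive construction
  have main : ∀ n, ∀ hn : n ≤ k + 1, ∃ y : Fin n → V,
      ∀ i : Fin n, y i ∈ K ⟨i.val, lt_of_lt_of_le i.isLt hn⟩ ∧
        (∀ j : Fin (k + 1), j.val ≠ i.val → y i ∉ K j) ∧
        (∀ j : Fin n, j.val < i.val → ¬ G.Adj (y j) (y i)) := by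
    intro n
    induction n with
    | zero => exact fun hn => ⟨Fin.elim0, fun i => i.elim0⟩
    | succ n ih =>
      intro hn
      obtain ⟨y, hy⟩ := ih (Nat.le_of_succ_le hn)
      set i₀ : Fin (k + 1) := ⟨n, hn⟩ with hi₀
      have hyK : ∀ j : Fin n, y j ∉ K i₀ := by
        intro j
        exact (hy j).2.1 i₀ (by simp [hi₀]; omega)
      -- the bad set
      set bad : V → Prop := fun v => v = x ∨ (∃ j : Fin (k + 1), j ≠ i₀ ∧ v ∈ K j) ∨
        (∃ j : Fin n, G.Adj (y j) v) with hbad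
      set B : Finset V := (K i₀).filter bad with hB
      set g : Fin (k + 1) → Finset V :=
        fun j => if j = i₀ then ∅ else ((K i₀ ∩ K j).erase x) with hg
      set h : Fin n → Finset V :=
        fun j => ((K i₀).filter (fun v => G.Adj (y j) v)).erase x with hh
      have hsub : B ⊆ insert x ((Finset.univ.biUnion g) ∪ (Finset.univ.biUnion h)) := by
        intro v hv
        rw [hB, Finset.mem_filter] at hv
        obtain ⟨hvK, hbadv⟩ := hv
        by_cases hvx : v = x
        · subst hvx; exact Finset.mem_insert_self _ _
        · refine Finset.mem_insert_of_mem ?_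
          rcases hbadv with h1 | ⟨j, hj, hvj⟩ | ⟨j, hadj⟩
          · exact absurd h1 hvx
          · refine Finset.mem_union_left _ (Finset.mem_biUnion.2 ⟨j, Finset.mem_univ _, ?_⟩)
            rw [hg]; simp only [if_neg hj]
            exact Finset.mem_erase.2 ⟨hvx, Finset.mem_inter.2 ⟨hvK, hvj⟩⟩
          · refine Finset.mem_union_right _ (Finset.mem_biUnion.2 ⟨j, Finset.mem_univ _, ?_⟩)
            rw [hh]
            exact Finset.mem_erase.2 ⟨hvx, Finset.mem_filter.2 ⟨hvK, hadj⟩⟩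
      have hgcard : ∀ j, (g j).card ≤ p - 1 := by
        intro j
        rw [hg]
        by_cases hj : j = i₀
        · simp [hj]
        · simp only [if_neg hj]
          have hne : K i₀ ≠ K j := fun hEq => hj (hKinj hEq).symm
          have hint : (K i₀ ∩ K j).card ≤ p :=
            hinter _ _ (hclique i₀) (hclique j) (hmax i₀) (hmax j) (hbig i₀) (hbig j) hne
          have hxmem : x ∈ K i₀ ∩ K j := Finset.mem_inter.2 ⟨hxin i₀, hxin j⟩
          rw [Finset.card_erase_of_mem hxmem]
          omega
      have hhcard : ∀ j, (h j).card ≤ p * k - 1 := by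
        intro j
        rw [hh]
        have hfil : ((K i₀).filter (fun v => G.Adj (y j) v)).card ≤ p * k :=
          hjoin _ (hclique i₀) (hmax i₀) (hbig i₀) (y j) (hyK j)
        have hyjx : y j ≠ x := fun hEq => hyK j (hEq ▸ hxin i₀)
        have hadjx : G.Adj (y j) x := by
          have h1 : y j ∈ K ⟨j.val, lt_of_lt_of_le j.isLt (Nat.le_of_succ_le hn)⟩ := (hy j).1
          exact (hclique _) (by exact_mod_cast h1) (by exact_mod_cast hxin _) hyjx
        have hxmem : x ∈ (K i₀).filter (fun v => G.Adj (y j) v) :=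
          Finset.mem_filter.2 ⟨hxin i₀, hadjx⟩
        rw [Finset.card_erase_of_mem hxmem]
        omega
      have hBcard : B.card ≤ 1 + (k * (p - 1) + k * (p * k - 1)) := by
        calc B.card ≤ (insert x ((Finset.univ.biUnion g) ∪ (Finset.univ.biUnion h))).card :=
              Finset.card_le_card hsub
          _ ≤ 1 + ((Finset.univ.biUnion g) ∪ (Finset.univ.biUnion h)).card :=
              le_trans (Finset.card_insert_le _ _) (by omega)
          _ ≤ 1 + ((Finset.univ.biUnion g).card + (Finset.univ.biUnion h).card) :=
              Nat.add_le_add_left (Finset.card_union_le _ _) 1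
          _ ≤ 1 + (k * (p - 1) + k * (p * k - 1)) := by
              gcongr
              · calc (Finset.univ.biUnion g).card ≤ ∑ j : Fin (k + 1), (g j).card :=
                      Finset.card_biUnion_le
                  _ = ∑ j ∈ Finset.univ.erase i₀, (g j).card := by
                      rw [← Finset.add_sum_erase _ _ (Finset.mem_univ i₀)]
                      simp [hg]
                  _ ≤ (Finset.univ.erase i₀).card * (p - 1) := by
                      apply Finset.sum_le_card_nsmul
                      intro j _
                      exact hgcard j
                  _ ≤ k * (p - 1) := by
                      rw [Finset.card_erase_of_mem (Finset.mem_univ _)]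
                      simp
              · calc (Finset.univ.biUnion h).card ≤ ∑ j : Fin n, (h j).card :=
                      Finset.card_biUnion_le
                  _ ≤ (Finset.univ : Finset (Fin n)).card * (p * k - 1) := by
                      apply Finset.sum_le_card_nsmul
                      intro j _
                      exact hhcard j
                  _ ≤ k * (p * k - 1) := by
                      apply Nat.mul_le_mul_right
                      simp; omega
      have hlt : B.card < (K i₀).card := by
        have hKc := hbig i₀
        have h1 : 1 ≤ p * k := Nat.one_le_iff_ne_zero.2 (by positivity)
        zify [hp, h1] at hBcard
        nlinarith [hBcard, hKc]
      have hz : ∃ z ∈ K i₀, ¬ bad z := by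
        by_contra hno
        push_neg at hno
        have : B = K i₀ := by
          rw [hB]; exact Finset.filter_true_of_mem hno
        rw [this] at hlt
        exact lt_irrefl _ hlt
      obtain ⟨z, hzK, hzbad⟩ := hz
      have hzx : z ≠ x := fun hEq => hzbad (Or.inl hEq)
      have hzother : ∀ j, j ≠ i₀ → z ∉ K j :=
        fun j hj hm => hzbad (Or.inr (Or.inl ⟨j, hj, hm⟩))
      have hzadj : ∀ j : Fin n, ¬ G.Adj (y j) z :=
        fun j ha => hzbad (Or.inr (Or.inr ⟨j, ha⟩))
      refine ⟨fun i => if hi : i.val < n then y ⟨i.val, hi⟩ else z, fun i => ⟨?_, ?_, ?_⟩⟩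
      · by_cases hi : i.val < n
        · simp only [dif_pos hi]
          exact (hy ⟨i.val, hi⟩).1
        · simp only [dif_neg hi]
          have hiv : i.val = n := by omega
          have : (⟨i.val, lt_of_lt_of_le i.isLt hn⟩ : Fin (k + 1)) = i₀ := by
            rw [hi₀]; exact Fin.ext hiv
          rw [this]; exact hzK
      · intro j hj
        by_cases hi : i.val < n
        · simp only [dif_pos hi]
          exact (hy ⟨i.val, hi⟩).2.1 j hj
        · simp only [dif_neg hi]
          have hiv : i.val = n := by omega
          refine hzother j (fun hEq => ?_)
          rw [hEq, hi₀] at hj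
          exact hj (by simp [hiv])
      · intro j hj
        by_cases hi : i.val < n
        · have hjn : j.val < n := lt_trans hj hi
          simp only [dif_pos hi, dif_pos hjn]
          exact (hy ⟨i.val, hi⟩).2.2 ⟨j.val, hjn⟩ hj
        · have hiv : i.val = n := by omega
          have hjn : j.val < n := by omega
          simp only [dif_neg hi, dif_pos hjn]
          exact hzadj ⟨j.val, hjn⟩
  obtain ⟨y, hy⟩ := main (k + 1) le_rfl
  have hyKi : ∀ i : Fin (k + 1), y i ∈ K i := fun i => (hy i).1
  have hyinj : Function.Injective y := by
    intro i j hEq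
    by_contra hne
    have hv : j.val ≠ i.val := fun e => hne (Fin.ext e.symm)
    exact (hy i).2.1 j hv (hEq ▸ hyKi j)
  have hyne : ∀ i, y i ≠ x := by
    intro i
    have hkk : 1 < k + 1 := by omega
    set j : Fin (k + 1) := if i.val = 0 then ⟨1, hkk⟩ else ⟨0, by omega⟩ with hj
    have hjv : j.val ≠ i.val := by
      rw [hj]; by_cases h0 : i.val = 0
      · simp [h0]
      · simp [h0]; omega
    intro hEq
    exact (hy i).2.1 j hjv (hEq ▸ hxin j)
  have hyadjx : ∀ i, G.Adj x (y i) := by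
    intro i
    exact (hclique i) (by exact_mod_cast hxin i) (by exact_mod_cast hyKi i)
      (Ne.symm (hyne i))
  refine hclaw ⟨x, Finset.image y Finset.univ, ?_, ?_, ?_⟩
  · rw [Finset.card_image_of_injective _ hyinj, Finset.card_univ, Fintype.card_fin]
  · intro v hv
    obtain ⟨i, _, rfl⟩ := Finset.mem_image.1 hv
    exact hyadjx i
  · intro v hv w hw hne
    obtain ⟨i, _, rfl⟩ := Finset.mem_image.1 hv
    obtain ⟨j, _, rfl⟩ := Finset.mem_image.1 hw
    rcases lt_trichotomy i.val j.val with hlt | hEq | hlt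
    · exact (hy j).2.2 i hlt
    · exact absurd (congrArg y (Fin.ext hEq)) hne
    · intro hadj
      exact (hy i).2.2 j hlt hadj.symm
end

section
/- Let N ≥ k ≥ 1 and let L = lcm(N, k), M = k·C(N,k)/L. Then the family of all k-subsets of [N] can be partitioned into M classes 𝒮₁, …, 𝒮_M, each of size L/k, such that every element j ∈ [N] belongs to exactly L/N sets of each class 𝒮ᵢ. -/
/-!
Baranyai's method. Process the elements one at a time. Once a set `U` of elements has been
processed, every class is a multiset of subsets of `U` such that each `T ⊆ U` with `#T ≤ k`
occurs `C(#Uᶜ, k - #T)` times in total, every class has `n` members, and every element of `U`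
lies in `r` members of every class. To process a new element `e`, let each member `T` of a class
receive `e` with weight `(k - #T) / #Uᶜ`. Per class these weights add up to `r` (this is where
the degree condition comes from), and per set `T` to `C(#Uᶜ - 1, k - #T - 1)`; since all these
totals are integers, the weights can be rounded to `0`/`1` choices with the same totals. The
rounding is a perfect matching of capacity tokens with slots, found by Hall's theorem from the
fractional perfect matching that the weights define. When `U` is everything, each `k`-set occurs
exactly once.
-/

open Finset

section FractionalMatching

variable {α β 𝕜 : Type*} [Fintype α] [Fintype β] [Field 𝕜] [LinearOrder 𝕜] [IsStrictOrderedRing 𝕜]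

theorem exists_injective_of_fractional_matching (μ : α → β → 𝕜) (hμ : ∀ a b, 0 ≤ μ a b)
    (hrow : ∀ a, ∑ b, μ a b = 1) (hcol : ∀ b, ∑ a, μ a b ≤ 1) :
    ∃ f : α → β, Function.Injective f ∧ ∀ a, μ a (f a) ≠ 0 := by
  classical
  let support a : Finset β := {b | μ a b ≠ 0}
  suffices ∃ f : α → β, Function.Injective f ∧ ∀ a, f a ∈ support a by
    simpa [support] using this
  rw [← all_card_le_biUnion_card_iff_exists_injective]
  intro A
  have hsupp : ∀ a ∈ A, ∑ b ∈ A.biUnion support, μ a b = 1 := fun a ha => by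
    rw [← hrow a]
    exact sum_subset (subset_univ _) fun b _ hb => not_not.1 fun h =>
      hb (mem_biUnion.2 ⟨a, ha, by simpa [support] using h⟩)
  have : (#A : 𝕜) ≤ #(A.biUnion support) := calc
    (#A : 𝕜) = ∑ a ∈ A, ∑ b ∈ A.biUnion support, μ a b := by simp [sum_congr rfl hsupp]
    _ = ∑ b ∈ A.biUnion support, ∑ a ∈ A, μ a b := sum_comm
    _ ≤ ∑ b ∈ A.biUnion support, ∑ a, μ a b :=
      sum_le_sum fun b _ => sum_le_sum_of_subset_of_nonneg (subset_univ _) fun a _ _ => hμ a b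
    _ ≤ #(A.biUnion support) := by
      simpa using sum_le_sum fun b (_ : b ∈ A.biUnion support) => hcol b
  exact_mod_cast this

theorem exists_equiv_of_fractional_perfect_matching (μ : α → β → 𝕜) (hμ : ∀ a b, 0 ≤ μ a b)
    (hrow : ∀ a, ∑ b, μ a b = 1) (hcol : ∀ b, ∑ a, μ a b = 1) :
    ∃ f : α ≃ β, ∀ a, μ a (f a) ≠ 0 := by
  obtain ⟨f, hf, hμf⟩ := exists_injective_of_fractional_matching μ hμ hrow fun b => (hcol b).le
  have hcard : (Fintype.card α : 𝕜) = Fintype.card β := by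
    simpa [hrow, hcol] using sum_comm (f := μ) (s := univ) (t := univ)
  have hbij := (Fintype.bijective_iff_injective_and_card f).2 ⟨hf, by exact_mod_cast hcard⟩
  exact ⟨.ofBijective f hbij, hμf⟩

end FractionalMatching

theorem card_filter_sigma_fst_eq {κ : Type*} {γ : κ → Type*} [Fintype κ] [DecidableEq κ]
    [∀ k, Fintype (γ k)] (k : κ) : #{x : Sigma γ | x.1 = k} = Fintype.card (γ k) := by
  rw [card_filter, Fintype.sum_sigma]
  simp [apply_ite]

namespace CapacityRounding

/-! A token of cell `(i, S)` is one unit of the capacity `B i S`; the slots are `t S` slots for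
each column `S` and `∑ S, B i S - r i` slack slots for each row `i`. A perfect matching of tokens
with slots that sends every token to its own column or its own row yields the rounding: `a i S` is
the number of tokens of `(i, S)` sent to column slots. -/

abbrev Token {ι τ : Type*} (B : ι → τ → ℕ) : Type _ := Σ p : ι × τ, Fin (B p.1 p.2)

variable {ι τ 𝕜 : Type*} {B : ι → τ → ℕ} {r : ι → ℕ} {t : τ → ℕ} {X : ι → τ → 𝕜}

variable (B r t) in
abbrev Slot [Fintype τ] : Type _ := (Σ S : τ, Fin (t S)) ⊕ (Σ i : ι, Fin (∑ S, B i S - r i))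

def Slot.label [Fintype τ] : Slot B r t → τ ⊕ ι := Sum.map Sigma.fst Sigma.fst

theorem Slot.card_label_inl [Fintype ι] [Fintype τ] [DecidableEq ι] [DecidableEq τ] (S : τ) :
    #{b : Slot B r t | b.label = .inl S} = t S := by
  rw [card_filter, Fintype.sum_sum_type]
  simp [label, card_filter_sigma_fst_eq]

theorem Slot.card_label_inr [Fintype ι] [Fintype τ] [DecidableEq ι] [DecidableEq τ] (i : ι) :
    #{b : Slot B r t | b.label = .inr i} = ∑ S, B i S - r i := by
  rw [card_filter, Fintype.sum_sum_type]
  simp [label, card_filter_sigma_fst_eq]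

/-- A token of cell `p` spreads the fraction `X p / B p` evenly over the slots of column `p.2`,
and the rest evenly over the slack slots of row `p.1`. -/
def weight [Fintype τ] [DecidableEq ι] [DecidableEq τ] [Field 𝕜] (B : ι → τ → ℕ) (r : ι → ℕ)
    (t : τ → ℕ) (X : ι → τ → 𝕜) (p : ι × τ) : Slot B r t → 𝕜
  | .inl ⟨S, _⟩ => if S = p.2 then X p.1 S / B p.1 S / t S else 0
  | .inr ⟨i, _⟩ => if i = p.1 then (1 - X i p.2 / B i p.2) / (∑ S, B i S - r i : ℕ) else 0

theorem Slot.label_eq_of_weight_ne_zero [Fintype τ] [DecidableEq ι] [DecidableEq τ] [Field 𝕜]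
    {p : ι × τ} {b : Slot B r t} (h : weight B r t X p b ≠ 0) :
    b.label = .inl p.2 ∨ b.label = .inr p.1 := by
  rcases b with ⟨S, j⟩ | ⟨i, j⟩ <;> simp only [weight] at h <;> split_ifs at h <;>
    simp_all [label]

section Weights

variable [Fintype τ] [Field 𝕜] [LinearOrder 𝕜] [IsStrictOrderedRing 𝕜]

theorem le_sum_of_sum_eq (hXB : ∀ i S, X i S ≤ B i S) (hrow : ∀ i, ∑ S, X i S = r i) (i : ι) :
    r i ≤ ∑ S, B i S := by
  have : (r i : 𝕜) ≤ ∑ S, (B i S : 𝕜) := hrow i ▸ sum_le_sum fun S _ => hXB i S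
  exact_mod_cast this

theorem cast_sum_sub_eq (hXB : ∀ i S, X i S ≤ B i S) (hrow : ∀ i, ∑ S, X i S = r i) (i : ι) :
    ((∑ S, B i S - r i : ℕ) : 𝕜) = ∑ S, (B i S - X i S) := by
  push_cast [le_sum_of_sum_eq hXB hrow i, sum_sub_distrib, hrow]
  ring

variable [DecidableEq ι] [DecidableEq τ]

theorem weight_nonneg (hX0 : ∀ i S, 0 ≤ X i S) (hXB : ∀ i S, X i S ≤ B i S) (p : ι × τ)
    (b : Slot B r t) : 0 ≤ weight B r t X p b := by
  have hq : X p.1 p.2 / B p.1 p.2 ≤ 1 := div_le_one_of_le₀ (hXB _ _) (by positivity)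
  rcases b with ⟨S, _⟩ | ⟨i, _⟩ <;> simp only [weight] <;> split_ifs with h
  · exact div_nonneg (div_nonneg (hX0 _ _) (by positivity)) (by positivity)
  · exact le_rfl
  · subst h
    exact div_nonneg (by linarith) (by positivity)
  · exact le_rfl

variable [Fintype ι] (hX0 : ∀ i S, 0 ≤ X i S) (hXB : ∀ i S, X i S ≤ B i S)
  (hrow : ∀ i, ∑ S, X i S = r i) (hcol : ∀ S, ∑ i, X i S = t S)
include hX0 hXB hrow hcol

theorem sum_weight (p : ι × τ) (hp : B p.1 p.2 ≠ 0) : ∑ b, weight B r t X p b = 1 := by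
  obtain ⟨i, S⟩ := p
  have hcol0 : (t S : 𝕜) = 0 → X i S / B i S = 0 := fun h => by
    rw [← hcol, sum_eq_zero_iff_of_nonneg fun i _ => hX0 i S] at h
    simp [h i (mem_univ _)]
  have hrow0 : ((∑ S, B i S - r i : ℕ) : 𝕜) = 0 → 1 - X i S / B i S = 0 := fun h => by
    rw [cast_sum_sub_eq hXB hrow, sum_eq_zero_iff_of_nonneg fun S _ => sub_nonneg.2 (hXB i S)] at h
    rw [← sub_eq_zero.1 (h S (mem_univ _)), div_self (by exact_mod_cast hp), sub_self]
  rw [Fintype.sum_sum_type, Fintype.sum_sigma, Fintype.sum_sigma]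
  simp [weight, mul_div_cancel_of_imp' hcol0, mul_div_cancel_of_imp' hrow0]

theorem sum_token_weight (b : Slot B r t) : ∑ x : Token B, weight B r t X x.1 b = 1 := by
  have hBX (i : ι) (S : τ) : (B i S : 𝕜) * X i S / B i S = X i S :=
    mul_div_cancel_left_of_imp fun h => le_antisymm (h ▸ hXB i S) (hX0 i S)
  rw [Fintype.sum_sigma]
  simp only [sum_const, card_univ, Fintype.card_fin, nsmul_eq_mul, Fintype.sum_prod_type]
  rcases b with ⟨S, j⟩ | ⟨i, j⟩
  · have : (t S : 𝕜) ≠ 0 := by exact_mod_cast j.pos.ne'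
    simp only [weight, mul_ite, mul_zero, sum_ite_eq, mem_univ, if_true, ← mul_div_assoc, hBX,
      ← sum_div, hcol, div_self this]
  · have : ((∑ S, B i S - r i : ℕ) : 𝕜) ≠ 0 := by exact_mod_cast j.pos.ne'
    simp only [weight, mul_ite, mul_zero, sum_ite_irrel, sum_const_zero, sum_ite_eq, mem_univ,
      if_true, ← mul_div_assoc, mul_sub, mul_one, hBX, ← sum_div, ← cast_sum_sub_eq hXB hrow,
      div_self this]

end Weights

theorem exists_of_equiv [Fintype ι] [Fintype τ] [DecidableEq ι] [DecidableEq τ]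
    (F : Token B ≃ Slot B r t) (hF : ∀ x, (F x).label = .inl x.1.2 ∨ (F x).label = .inr x.1.1)
    (hr : ∀ i, r i ≤ ∑ S, B i S) :
    ∃ a : ι → τ → ℕ, (∀ i S, a i S ≤ B i S) ∧ (∀ i, ∑ S, a i S = r i) ∧ ∀ S, ∑ i, a i S = t S := by
  have hfiber (c : τ ⊕ ι) : #{b : Slot B r t | b.label = c} =
      ∑ p : ι × τ, #{k : Fin (B p.1 p.2) | (F ⟨p, k⟩).label = c} := by
    rw [← card_equiv F (s := {x | (F x).label = c}) (by simp)]
    simp only [card_filter, Fintype.sum_sigma]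
  let a i S := #{k : Fin (B i S) | (F ⟨(i, S), k⟩).label = .inl S}
  let slack i S := #{k : Fin (B i S) | (F ⟨(i, S), k⟩).label = .inr i}
  have ha_add_slack (i : ι) (S : τ) : a i S + slack i S = B i S := by
    have h := card_filter_add_card_filter_not (s := univ)
      fun k : Fin (B i S) => (F ⟨(i, S), k⟩).label = .inl S
    rw [card_univ, Fintype.card_fin] at h
    convert h using 3
    ext k
    rcases hF ⟨(i, S), k⟩ with h | h <;> simp [h]
  have hcol (S : τ) : #{b : Slot B r t | b.label = .inl S} = ∑ i, a i S := by
    rw [hfiber, Fintype.sum_prod_type]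
    refine sum_congr rfl fun i _ => Fintype.sum_eq_single S fun S' hS' => ?_
    rw [card_eq_zero, filter_eq_empty_iff]
    rintro k - h
    rcases hF ⟨(i, S'), k⟩ with h' | h' <;> simp_all
  have hrow (i : ι) : #{b : Slot B r t | b.label = .inr i} = ∑ S, slack i S := by
    rw [hfiber, Fintype.sum_prod_type]
    refine Fintype.sum_eq_single i fun i' hi' => sum_eq_zero fun S _ => ?_
    rw [card_eq_zero, filter_eq_empty_iff]
    rintro k - h
    rcases hF ⟨(i', S), k⟩ with h' | h' <;> simp_all
  refine ⟨a, fun i S => (card_filter_le _ _).trans (by simp), fun i => ?_,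
    fun S => (hcol S).symm.trans (Slot.card_label_inl S)⟩
  have h := Slot.card_label_inr (B := B) (r := r) (t := t) i
  have hle := hr i
  rw [hrow] at h
  rw [← sum_congr rfl fun S _ => ha_add_slack i S, sum_add_distrib] at h hle
  omega

end CapacityRounding

open CapacityRounding in
theorem exists_nat_rounding {ι τ 𝕜 : Type*} [Fintype ι] [Fintype τ] [Field 𝕜] [LinearOrder 𝕜]
    [IsStrictOrderedRing 𝕜] {B : ι → τ → ℕ} {r : ι → ℕ} {t : τ → ℕ} (X : ι → τ → 𝕜)
    (hX0 : ∀ i S, 0 ≤ X i S) (hXB : ∀ i S, X i S ≤ B i S) (hrow : ∀ i, ∑ S, X i S = r i)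
    (hcol : ∀ S, ∑ i, X i S = t S) :
    ∃ a : ι → τ → ℕ, (∀ i S, a i S ≤ B i S) ∧ (∀ i, ∑ S, a i S = r i) ∧ ∀ S, ∑ i, a i S = t S := by
  classical
  obtain ⟨F, hF⟩ := exists_equiv_of_fractional_perfect_matching
    (fun x : Token B => weight B r t X x.1) (fun x => weight_nonneg hX0 hXB x.1)
    (fun x => sum_weight hX0 hXB hrow hcol x.1 x.2.pos.ne') (sum_token_weight hX0 hXB hrow hcol)
  exact exists_of_equiv F (fun x => Slot.label_eq_of_weight_ne_zero (hF x))
    (le_sum_of_sum_eq hXB hrow)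

section FinsetSums

variable {α M : Type*} [Fintype α] [AddCommMonoid M]

theorem sum_eq_sum_powerset {V : Finset α} {f : Finset α → M} (hf : ∀ S, f S ≠ 0 → S ⊆ V) :
    ∑ S, f S = ∑ S ∈ V.powerset, f S :=
  (sum_subset (subset_univ _) fun S _ hS => not_not.1 fun h => hS (mem_powerset.2 (hf S h))).symm

variable [DecidableEq α]

theorem sum_eq_sum_powerset_add_insert {U : Finset α} {e : α} (he : e ∉ U) {f : Finset α → M}
    (hf : ∀ S, f S ≠ 0 → S ⊆ insert e U) :
    ∑ S, f S = ∑ S ∈ U.powerset, (f S + f (insert e S)) := by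
  rw [sum_eq_sum_powerset hf, sum_powerset_insert he, sum_add_distrib]

theorem card_compl_insert {U : Finset α} {e : α} (he : e ∉ U) : #(insert e U)ᶜ = #Uᶜ - 1 := by
  rw [compl_insert, card_erase_of_mem (mem_compl.2 he)]

end FinsetSums

theorem sum_eq_card_filter_ne_zero {β : Type*} {s : Finset β} {f : β → ℕ} (hf : ∀ x, f x ≤ 1) :
    ∑ x ∈ s, f x = #{x ∈ s | f x ≠ 0} := by
  rw [card_filter]
  exact sum_congr rfl fun x _ => by have := hf x; split_ifs <;> omega

namespace Baranyai

variable {α ι : Type*}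

def extend [DecidableEq α] (e : α) (B a : ι → Finset α → ℕ) (i : ι) (S : Finset α) : ℕ :=
  if e ∈ S then a i (S.erase e) else B i S - a i S

theorem extend_of_notMem [DecidableEq α] {e : α} {S : Finset α} (B a : ι → Finset α → ℕ) (i : ι)
    (h : e ∉ S) : extend e B a i S = B i S - a i S :=
  if_neg h

theorem extend_insert [DecidableEq α] {e : α} {S : Finset α} (B a : ι → Finset α → ℕ) (i : ι)
    (h : e ∉ S) : extend e B a i (insert e S) = a i S := by
  rw [extend, if_pos (mem_insert_self e S), erase_insert h]

variable [Fintype α] [DecidableEq α] [Fintype ι]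

/-- `B i S` is the multiplicity of `S` in the `i`-th class, once the elements of `U` have been
processed. -/
structure IsPartial (k n r : ℕ) (U : Finset α) (B : ι → Finset α → ℕ) : Prop where
  subset_of_ne_zero : ∀ i S, B i S ≠ 0 → S ⊆ U
  card_le_of_ne_zero : ∀ i S, B i S ≠ 0 → #S ≤ k
  sum_eq_choose : ∀ S ⊆ U, #S ≤ k → ∑ i, B i S = (#Uᶜ).choose (k - #S)
  sum_eq : ∀ i, ∑ S, B i S = n
  sum_filter_mem_eq : ∀ i, ∀ j ∈ U, ∑ S with j ∈ S, B i S = r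

theorem isPartial_empty {k n : ℕ} (r : ℕ) (h : Fintype.card ι * n = (Fintype.card α).choose k) :
    IsPartial k n r (∅ : Finset α) fun (_ : ι) S => if S = ∅ then n else 0 where
  subset_of_ne_zero i S hS := by simp_all
  card_le_of_ne_zero i S hS := by simp_all
  sum_eq_choose S hS _ := by simp_all
  sum_eq i := by simp
  sum_filter_mem_eq i j hj := by simp at hj

variable {k n r : ℕ} {U : Finset α} {B : ι → Finset α → ℕ}

theorem IsPartial.sum_mul_card (hB : IsPartial k n r U B) (i : ι) :
    ∑ S, B i S * #S = #U * r := calc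
  ∑ S, B i S * #S = ∑ j, ∑ S with j ∈ S, B i S := by
    simp only [sum_filter]
    rw [sum_comm]
    simp only [sum_ite_mem, univ_inter, sum_const, smul_eq_mul, mul_comm]
  _ = ∑ j ∈ U, ∑ S with j ∈ S, B i S := by
    refine (sum_subset (subset_univ U) fun j _ hj => sum_eq_zero fun S hS => ?_).symm
    exact not_not.1 fun h => hj (hB.subset_of_ne_zero i S h (mem_filter.1 hS).2)
  _ = #U * r := by rw [sum_congr rfl (hB.sum_filter_mem_eq i), sum_const, smul_eq_mul]

theorem IsPartial.sum_mul_sub_card (hB : IsPartial k n r U B) (hnk : n * k = Fintype.card α * r)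
    (i : ι) : ∑ S, B i S * (k - #S) = #Uᶜ * r := by
  have h : ∑ S, B i S * (k - #S) + ∑ S, B i S * #S = n * k := by
    rw [← sum_add_distrib, ← hB.sum_eq i, sum_mul]
    refine sum_congr rfl fun S _ => ?_
    rcases eq_or_ne (B i S) 0 with h | h
    · simp [h]
    · rw [← mul_add, Nat.sub_add_cancel (hB.card_le_of_ne_zero i S h)]
  rw [hB.sum_mul_card, hnk] at h
  rw [card_compl, Nat.sub_mul]
  omega

theorem IsPartial.sub_card_le_of_ne_zero (hB : IsPartial k n r U B) {i : ι} {S : Finset α}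
    (h : B i S ≠ 0) : k - #S ≤ #Uᶜ := by
  have hsum := hB.sum_eq_choose S (hB.subset_of_ne_zero i S h) (hB.card_le_of_ne_zero i S h)
  by_contra hlt
  rw [Nat.choose_eq_zero_of_lt (not_le.1 hlt), sum_eq_zero_iff] at hsum
  exact h (hsum i (mem_univ _))

variable (k) in
/-- The number of copies of `S` that receive the next element. -/
def insertCount (U S : Finset α) : ℕ :=
  if S ⊆ U ∧ #S < k then (#Uᶜ - 1).choose (k - #S - 1) else 0

theorem IsPartial.exists_rounding (hB : IsPartial k n r U B) {e : α} (he : e ∉ U)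
    (hnk : n * k = Fintype.card α * r) :
    ∃ a : ι → Finset α → ℕ, (∀ i S, a i S ≤ B i S) ∧ (∀ i, ∑ S, a i S = r) ∧
      ∀ S, ∑ i, a i S = insertCount k U S := by
  have hc : 0 < #Uᶜ := card_pos.2 ⟨e, mem_compl.2 he⟩
  have hcℚ : (#Uᶜ : ℚ) ≠ 0 := by exact_mod_cast hc.ne'
  refine exists_nat_rounding (fun i S => (B i S * (k - #S : ℕ) / #Uᶜ : ℚ))
    (fun i S => by positivity) (fun i S => ?_) (fun i => ?_) (fun S => ?_)
  · rcases eq_or_ne (B i S) 0 with h | h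
    · simp [h]
    rw [mul_div_assoc]
    refine mul_le_of_le_one_right (by positivity) (div_le_one_of_le₀ ?_ (by positivity))
    exact_mod_cast hB.sub_card_le_of_ne_zero h
  · rw [← sum_div, div_eq_iff hcℚ]
    exact_mod_cast (hB.sum_mul_sub_card hnk i).trans (mul_comm _ _)
  · rw [← sum_div, ← sum_mul, div_eq_iff hcℚ]
    by_cases hS : S ⊆ U ∧ #S ≤ k
    · rw [← Nat.cast_sum, hB.sum_eq_choose S hS.1 hS.2, insertCount]
      split_ifs with hlt
      · obtain ⟨c, hc⟩ : ∃ c, #Uᶜ = c + 1 := ⟨_, (Nat.sub_add_cancel hc).symm⟩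
        obtain ⟨j, hj⟩ : ∃ j, k - #S = j + 1 :=
          ⟨_, (Nat.sub_add_cancel (Nat.sub_pos_of_lt hlt.2)).symm⟩
        rw [hc, hj, Nat.add_sub_cancel, Nat.add_sub_cancel]
        exact_mod_cast (Nat.add_one_mul_choose_eq c j).symm.trans (mul_comm _ _)
      · simp [Nat.sub_eq_zero_of_le (not_lt.1 fun h => hlt ⟨hS.1, h⟩)]
    · have hB0 (i : ι) : B i S = 0 := not_not.1 fun h =>
        hS ⟨hB.subset_of_ne_zero i S h, hB.card_le_of_ne_zero i S h⟩
      rw [insertCount, if_neg fun h => hS ⟨h.1, h.2.le⟩]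
      simp [hB0]

theorem subset_card_lt_of_ne_zero {a : ι → Finset α → ℕ}
    (hcol : ∀ S, ∑ i, a i S = insertCount k U S) {i : ι} {S : Finset α} (h : a i S ≠ 0) :
    S ⊆ U ∧ #S < k := by
  have : insertCount k U S ≠ 0 := by
    rw [← hcol]
    exact ((Nat.pos_of_ne_zero h).trans_le
      (single_le_sum (f := (a · S)) (fun _ _ => Nat.zero_le _) (mem_univ i))).ne'
  unfold insertCount at this
  split_ifs at this with h'
  · exact h'
  · exact absurd rfl this

section Extend

variable {e : α} {a : ι → Finset α → ℕ} (hB : IsPartial k n r U B) (he : e ∉ U)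
  (haB : ∀ i S, a i S ≤ B i S) (hcol : ∀ S, ∑ i, a i S = insertCount k U S)
include hB hcol

theorem extend_ne_zero {i : ι} {S : Finset α} (h : extend e B a i S ≠ 0) :
    S ⊆ insert e U ∧ #S ≤ k := by
  by_cases heS : e ∈ S
  · rw [extend, if_pos heS] at h
    obtain ⟨hsub, hlt⟩ := subset_card_lt_of_ne_zero hcol h
    rw [card_erase_of_mem heS] at hlt
    exact ⟨subset_insert_iff.2 hsub, by omega⟩
  · rw [extend_of_notMem B a i heS] at h
    have hBS : B i S ≠ 0 := by omega
    exact ⟨(hB.subset_of_ne_zero i S hBS).trans (subset_insert e U), hB.card_le_of_ne_zero i S hBS⟩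

include he haB

theorem sum_extend_eq_choose {S : Finset α} (hS : S ⊆ insert e U) (hSk : #S ≤ k) :
    ∑ i, extend e B a i S = (#(insert e U)ᶜ).choose (k - #S) := by
  rw [card_compl_insert he]
  by_cases heS : e ∈ S
  · have hpos : 0 < #S := card_pos.2 ⟨e, heS⟩
    simp only [extend, if_pos heS]
    rw [hcol, insertCount, if_pos ⟨subset_insert_iff.1 hS, by rw [card_erase_of_mem heS]; omega⟩,
      card_erase_of_mem heS]
    congr 1
    omega
  · have hSU := (subset_insert_iff_of_notMem heS).1 hS
    simp only [extend_of_notMem B a _ heS]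
    rw [sum_tsub_distrib _ fun i _ => haB i S, hB.sum_eq_choose S hSU hSk, hcol, insertCount]
    split_ifs with hlt
    · obtain ⟨c, hc⟩ : ∃ c, #Uᶜ = c + 1 :=
        ⟨_, (Nat.sub_add_cancel (card_pos.2 ⟨e, mem_compl.2 he⟩)).symm⟩
      obtain ⟨j, hj⟩ : ∃ j, k - #S = j + 1 :=
        ⟨_, (Nat.sub_add_cancel (Nat.sub_pos_of_lt hlt.2)).symm⟩
      rw [hc, hj, Nat.choose_succ_succ']
      simp
    · simp [Nat.sub_eq_zero_of_le (not_lt.1 fun h => hlt ⟨hSU, h⟩)]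

theorem sum_extend (i : ι) : ∑ S, extend e B a i S = n := by
  rw [sum_eq_sum_powerset_add_insert he fun S h => (extend_ne_zero hB hcol h).1, ← hB.sum_eq i,
    sum_eq_sum_powerset fun S h => hB.subset_of_ne_zero i S h]
  refine sum_congr rfl fun S hS => ?_
  have heS : e ∉ S := fun h => he (mem_powerset.1 hS h)
  rw [extend_of_notMem B a i heS, extend_insert B a i heS, Nat.sub_add_cancel (haB i S)]

theorem sum_filter_mem_extend (hrow : ∀ i, ∑ S, a i S = r) (i : ι) {j : α}
    (hj : j ∈ insert e U) : ∑ S with j ∈ S, extend e B a i S = r := by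
  rw [sum_filter, sum_eq_sum_powerset_add_insert he
    fun S h => (extend_ne_zero hB hcol (ite_ne_right_iff.1 h).2).1]
  rcases mem_insert.1 hj with rfl | hjU
  · rw [← hrow i, sum_eq_sum_powerset fun S h => (subset_card_lt_of_ne_zero hcol h).1]
    refine sum_congr rfl fun S hS => ?_
    have hjS : j ∉ S := fun h => he (mem_powerset.1 hS h)
    simp [hjS, extend_insert B a i hjS]
  · rw [← hB.sum_filter_mem_eq i j hjU, sum_filter,
      sum_eq_sum_powerset fun S h => hB.subset_of_ne_zero i S (ite_ne_right_iff.1 h).2]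
    refine sum_congr rfl fun S hS => ?_
    have heS : e ∉ S := fun h => he (mem_powerset.1 hS h)
    have hje : j ≠ e := fun h => he (h ▸ hjU)
    simp only [mem_insert, hje, false_or, extend_of_notMem B a i heS, extend_insert B a i heS]
    split_ifs
    · exact Nat.sub_add_cancel (haB i S)
    · rfl

theorem IsPartial.extend (hrow : ∀ i, ∑ S, a i S = r) :
    IsPartial k n r (insert e U) (extend e B a) where
  subset_of_ne_zero _ _ h := (extend_ne_zero hB hcol h).1
  card_le_of_ne_zero _ _ h := (extend_ne_zero hB hcol h).2
  sum_eq_choose _ hS hSk := sum_extend_eq_choose hB he haB hcol hS hSk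
  sum_eq := sum_extend hB he haB hcol
  sum_filter_mem_eq i _ hj := sum_filter_mem_extend hB he haB hcol hrow i hj

end Extend

theorem exists_isPartial (hM : Fintype.card ι * n = (Fintype.card α).choose k)
    (hnk : n * k = Fintype.card α * r) (U : Finset α) :
    ∃ B : ι → Finset α → ℕ, IsPartial k n r U B := by
  induction U using Finset.induction_on with
  | empty => exact ⟨_, isPartial_empty r hM⟩
  | insert e U he ih =>
    obtain ⟨B, hB⟩ := ih
    obtain ⟨a, haB, hrow, hcol⟩ := hB.exists_rounding he hnk
    exact ⟨_, hB.extend he haB hcol hrow⟩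

theorem IsPartial.sum_eq_of_univ (hB : IsPartial k n r (univ : Finset α) B) (S : Finset α) :
    ∑ i, B i S = if #S = k then 1 else 0 := by
  by_cases hSk : #S ≤ k
  · rw [hB.sum_eq_choose S (subset_univ S) hSk, compl_univ, card_empty]
    split_ifs with h
    · simp [h]
    · exact Nat.choose_eq_zero_of_lt (by omega)
  · rw [if_neg (by omega)]
    exact sum_eq_zero fun i _ => not_not.1 fun h => hSk (hB.card_le_of_ne_zero i S h)

theorem exists_partition (hM : Fintype.card ι * n = (Fintype.card α).choose k)
    (hnk : n * k = Fintype.card α * r) :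
    ∃ 𝒮 : ι → Finset (Finset α), (∀ i, ∀ S ∈ 𝒮 i, #S = k) ∧ (∀ S, #S = k → ∃! i, S ∈ 𝒮 i) ∧
      (∀ i, #(𝒮 i) = n) ∧ ∀ i j, #{S ∈ 𝒮 i | j ∈ S} = r := by
  obtain ⟨B, hB⟩ := exists_isPartial hM hnk univ
  have hle_sum (i : ι) (S : Finset α) : B i S ≤ ∑ i, B i S :=
    single_le_sum (f := (B · S)) (fun _ _ => Nat.zero_le _) (mem_univ i)
  have hle (i : ι) (S : Finset α) : B i S ≤ 1 :=
    (hle_sum i S).trans (by rw [hB.sum_eq_of_univ]; split_ifs <;> simp)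
  refine ⟨fun i => {S | B i S ≠ 0}, fun i S hS => ?_, fun S hS => ?_, fun i => ?_, fun i j => ?_⟩
  · by_contra h
    have := (hle_sum i S).trans_eq (hB.sum_eq_of_univ S)
    rw [if_neg h] at this
    exact (mem_filter.1 hS).2 (Nat.le_zero.1 this)
  · obtain ⟨i, hi⟩ := card_eq_one.1 <| (sum_eq_card_filter_ne_zero (hle · S)).symm.trans
      ((hB.sum_eq_of_univ S).trans (if_pos hS))
    refine ⟨i, ?_, fun i' hi' => ?_⟩ <;> simp_all [Finset.ext_iff]
  · rw [← sum_eq_card_filter_ne_zero (hle i), hB.sum_eq i]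
  · rw [filter_filter, ← hB.sum_filter_mem_eq i j (mem_univ j), sum_eq_card_filter_ne_zero (hle i),
      filter_filter]
    simp only [and_comm]

end Baranyai

theorem baranyai_partition_general (N k L M : ℕ) (hk : 1 ≤ k)
    (hL : L = Nat.lcm N k) (hM : M * L = k * Nat.choose N k) :
    ∃ 𝒮 : Fin M → Finset (Finset (Fin N)),
      (∀ i, ∀ S ∈ 𝒮 i, S.card = k) ∧
      (∀ S : Finset (Fin N), S.card = k → ∃! i : Fin M, S ∈ 𝒮 i) ∧
      (∀ i, (𝒮 i).card = L / k) ∧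
      (∀ i, ∀ j : Fin N, ((𝒮 i).filter (fun S => j ∈ S)).card = L / N) := by
  have hLk : L / k * k = L := Nat.div_mul_cancel (hL ▸ Nat.dvd_lcm_right N k)
  have hLN : N * (L / N) = L := Nat.mul_div_cancel' (hL ▸ Nat.dvd_lcm_left N k)
  have hsize : M * (L / k) = N.choose k :=
    Nat.eq_of_mul_eq_mul_right hk (by rw [mul_assoc, hLk, hM, mul_comm])
  exact Baranyai.exists_partition (by simpa using hsize) (by simpa [hLN] using hLk)

/-- Baranyai-type partition: for `N ≥ k ≥ 1`, with `L = lcm(N,k)` and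
`M = k·C(N,k)/L`, the `k`-subsets of `[N]` can be partitioned into `M` classes, each
of size `L/k`, such that every element lies in exactly `L/N` sets of each class. -/
theorem baranyai_partition (N k L M : ℕ) (hk : 1 ≤ k) (hkN : k ≤ N)
    (hL : L = Nat.lcm N k) (hM : M * L = k * Nat.choose N k) :
    ∃ 𝒮 : Fin M → Finset (Finset (Fin N)),
      (∀ i, ∀ S ∈ 𝒮 i, S.card = k) ∧
      (∀ S : Finset (Fin N), S.card = k → ∃! i : Fin M, S ∈ 𝒮 i) ∧
      (∀ i, (𝒮 i).card = L / k) ∧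
      (∀ i, ∀ j : Fin N, ((𝒮 i).filter (fun S => j ∈ S)).card = L / N) :=
  baranyai_partition_general N k L M hk hL hM
end

section
/- For every pair of positive integers k ≥ 2 and p ≥ 1 there exists a finite family ℱ(k,p) of graphs such that: any graph G whose minimum edge-degree (minimum number of triangles containing an edge) is at least p·k³ + (p−3)·k + 1 is the line graph of some k-uniform hypergraph with multiplicity at most p if and only if G has no induced subgraph isomorphic to a member of ℱ(k,p). -/
/-!
Take the forbidden family to be all graphs on at most `localBound k p` vertices that are not line
graphs of `k`-uniform hypergraphs of multiplicity at most `p`; such line graphs are closed under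
induced subgraphs, so only the converse needs work. Suppose every small induced subgraph of `G` is
such a line graph. A clique of `p k² + 2` vertices is then represented by hyperedges through a
common point, and the edge-degree bound puts every edge in such a big clique. Two big maximal
cliques share at most `p` vertices, each vertex lies in at most `k` of them, and distinct vertices
do not lie in the same `k` of them. So the big maximal cliques through `u`, padded with private
points up to `k`, form a hyperedge for `u`, and these hyperedges realise `G` as a line graph.
-/

namespace HypergraphLineGraph

open Finset SimpleGraph

variable {V V' α β : Type*}

theorem card_le_mul_of_forall_inter_nonempty {ι : Type*} [DecidableEq α] {s : Finset ι}
    {t : Finset α} {f : ι → Finset α} {m : ℕ} (hs : ∀ i ∈ s, (f i ∩ t).Nonempty)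
    (hm : ∀ y ∈ t, #{i ∈ s | y ∈ f i} ≤ m) : #s ≤ #t * m := by
  classical
  calc #s ≤ #(t.biUnion fun y => {i ∈ s | y ∈ f i}) := card_le_card fun i hi => by
        obtain ⟨y, hy⟩ := hs i hi
        rw [mem_inter] at hy
        exact mem_biUnion.2 ⟨y, hy.2, mem_filter.2 ⟨hi, hy.1⟩⟩
    _ ≤ #t * m := card_biUnion_le_card_mul _ _ _ hm

def IsLineGraph (k p : ℕ) (G : SimpleGraph V) : Prop :=
  ∃ (nX : ℕ) (H : Finset (Finset (Fin nX))),
    (∀ e ∈ H, e.card = k) ∧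
    (∀ x y : Fin nX, x ≠ y → (H.filter (fun e => x ∈ e ∧ y ∈ e)).card ≤ p) ∧
    ∃ φ : V ≃ {e // e ∈ H},
      ∀ u v : V, G.Adj u v ↔
        (u ≠ v ∧ ((φ u : Finset (Fin nX)) ∩ (φ v : Finset (Fin nX))).Nonempty)

/-- A labelling of the vertices in `W` by the hyperedges of a `k`-uniform hypergraph on `α`
with multiplicity at most `p`, whose line graph is `G` restricted to `W`. -/
structure LineRep (k p : ℕ) (G : SimpleGraph V) (W : Set V) (α : Type*) [DecidableEq α] where
  edge : V → Finset α
  card_edge : ∀ v ∈ W, #(edge v) = k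
  injOn_edge : Set.InjOn edge W
  card_le_of_mem_edge : ∀ x y, x ≠ y → ∀ s : Finset V, ↑s ⊆ W →
    (∀ v ∈ s, x ∈ edge v ∧ y ∈ edge v) → #s ≤ p
  adj_iff : ∀ u ∈ W, ∀ v ∈ W, G.Adj u v ↔ u ≠ v ∧ (edge u ∩ edge v).Nonempty

namespace LineRep

variable [DecidableEq α] {k p : ℕ} {G : SimpleGraph V} {W : Set V}

def mono (R : LineRep k p G W α) {W' : Set V} (h : W' ⊆ W) : LineRep k p G W' α where
  edge := R.edge
  card_edge v hv := R.card_edge v (h hv)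
  injOn_edge := R.injOn_edge.mono h
  card_le_of_mem_edge x y hxy s hs := R.card_le_of_mem_edge x y hxy s (hs.trans h)
  adj_iff u hu v hv := R.adj_iff u (h hu) v (h hv)

def comap (R : LineRep k p G W α) {G' : SimpleGraph V'} (f : G' ↪g G) {W' : Set V'}
    (hf : Set.MapsTo f W' W) : LineRep k p G' W' α where
  edge := R.edge ∘ f
  card_edge v hv := R.card_edge _ (hf hv)
  injOn_edge a ha b hb h := f.injective (R.injOn_edge (hf ha) (hf hb) h)
  card_le_of_mem_edge x y hxy s hs hxys := by
    rw [← card_map f.toEmbedding]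
    refine R.card_le_of_mem_edge x y hxy _ ?_ ?_ <;> simp only [coe_map, Set.image_subset_iff,
      mem_map, forall_exists_index, and_imp, forall_apply_eq_imp_iff₂]
    · exact fun v hv => hf (hs hv)
    · exact hxys
  adj_iff u hu v hv := by
    rw [← f.map_adj_iff, R.adj_iff _ (hf hu) _ (hf hv), f.injective.ne_iff]
    rfl

def equiv (R : LineRep k p G W α) [DecidableEq β] (e : α ≃ β) : LineRep k p G W β where
  edge v := (R.edge v).map e.toEmbedding
  card_edge v hv := by rw [card_map, R.card_edge v hv]
  injOn_edge a ha b hb h := R.injOn_edge ha hb (map_injective _ h)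
  card_le_of_mem_edge x y hxy s hs hxys :=
    R.card_le_of_mem_edge (e.symm x) (e.symm y) (e.symm.injective.ne hxy) s hs fun v hv => by
      simpa only [mem_map_equiv] using hxys v hv
  adj_iff u hu v hv := by rw [R.adj_iff u hu v hv, ← map_inter, map_nonempty]

theorem extend_edge_of_mem (R : LineRep k p (G.induce W) Set.univ α) {v : V} (hv : v ∈ W) :
    Function.extend Subtype.val R.edge (fun _ => ∅) v = R.edge ⟨v, hv⟩ :=
  Subtype.val_injective.extend_apply _ _ ⟨v, hv⟩

noncomputable def ofInduce (R : LineRep k p (G.induce W) Set.univ α) : LineRep k p G W α where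
  edge := Function.extend Subtype.val R.edge fun _ => ∅
  card_edge v hv := by rw [R.extend_edge_of_mem hv, R.card_edge _ trivial]
  injOn_edge a ha b hb h := by
    rw [R.extend_edge_of_mem ha, R.extend_edge_of_mem hb] at h
    exact congrArg Subtype.val (R.injOn_edge trivial trivial h)
  card_le_of_mem_edge x y hxy s hs hxys := by
    classical
    have hsub : #(s.subtype (· ∈ W)) = #s := by
      rw [card_subtype, filter_true_of_mem fun v hv => hs hv]
    rw [← hsub]
    refine R.card_le_of_mem_edge x y hxy _ (Set.subset_univ _) fun v hv => ?_
    rw [← R.extend_edge_of_mem v.2]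
    exact hxys v (mem_subtype.1 hv)
  adj_iff u hu v hv := by
    rw [R.extend_edge_of_mem hu, R.extend_edge_of_mem hv, ne_eq, ← Subtype.mk.injEq _ hu _ hv,
      ← ne_eq, ← R.adj_iff _ trivial _ trivial]
    rfl

end LineRep

theorem IsLineGraph.exists_lineRep {k p : ℕ} {G : SimpleGraph V} (hG : IsLineGraph k p G) :
    ∃ nX, Nonempty (LineRep k p G Set.univ (Fin nX)) := by
  obtain ⟨nX, H, hcard, hmult, φ, hadj⟩ := hG
  refine ⟨nX, ⟨{
    edge := fun v => φ v
    card_edge := fun v _ => hcard _ (φ v).2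
    injOn_edge := fun a _ b _ h => φ.injective (Subtype.ext h)
    card_le_of_mem_edge := fun x y hxy s _ hxys =>
      (card_le_card_of_injOn (fun v => (φ v : Finset (Fin nX)))
        (fun v hv => mem_filter.2 ⟨(φ v).2, hxys v hv⟩)
        fun a _ b _ h => φ.injective (Subtype.ext h)).trans (hmult x y hxy)
    adj_iff := fun u _ v _ => hadj u v }⟩⟩

theorem isLineGraph_of_lineRep_fin [Fintype V] {k p nX : ℕ} {G : SimpleGraph V}
    (R : LineRep k p G Set.univ (Fin nX)) : IsLineGraph k p G := by
  classical
  have hbij : Function.Bijective fun v => (⟨R.edge v, mem_image_of_mem _ (mem_univ v)⟩ :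
      {e // e ∈ univ.image R.edge}) :=
    ⟨fun a b h => R.injOn_edge trivial trivial (congrArg Subtype.val h), fun ⟨e, he⟩ => by
      obtain ⟨v, -, rfl⟩ := mem_image.1 he
      exact ⟨v, rfl⟩⟩
  refine ⟨nX, univ.image R.edge, ?_, fun x y hxy => ?_, Equiv.ofBijective _ hbij,
    fun u v => R.adj_iff u trivial v trivial⟩
  · rintro e he
    obtain ⟨v, -, rfl⟩ := mem_image.1 he
    exact R.card_edge v trivial
  · calc #{e ∈ univ.image R.edge | x ∈ e ∧ y ∈ e}
        ≤ #(({v | x ∈ R.edge v ∧ y ∈ R.edge v} : Finset V).image R.edge) :=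
          card_le_card fun e he => by
            obtain ⟨he, hxe, hye⟩ := mem_filter.1 he
            obtain ⟨v, -, rfl⟩ := mem_image.1 he
            exact mem_image_of_mem _ (mem_filter.2 ⟨mem_univ v, hxe, hye⟩)
      _ ≤ #({v | x ∈ R.edge v ∧ y ∈ R.edge v} : Finset V) := card_image_le
      _ ≤ p := R.card_le_of_mem_edge x y hxy _ (Set.subset_univ _) fun v hv => (mem_filter.1 hv).2

theorem isLineGraph_of_lineRep [Fintype V] [Fintype α] [DecidableEq α] {k p : ℕ}
    {G : SimpleGraph V} (R : LineRep k p G Set.univ α) : IsLineGraph k p G :=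
  isLineGraph_of_lineRep_fin (R.equiv (Fintype.equivFin α))

theorem IsLineGraph.of_embedding [Fintype V'] {k p : ℕ} {G : SimpleGraph V}
    {G' : SimpleGraph V'} (hG : IsLineGraph k p G) (f : G' ↪g G) : IsLineGraph k p G' := by
  obtain ⟨nX, ⟨R⟩⟩ := hG.exists_lineRep
  exact isLineGraph_of_lineRep (R.comap f (Set.mapsTo_univ _ _))

/-- Common neighbours of an edge `uv` whose hyperedge misses `e u ∩ e v` number at most
`p (k - 1)²`; the rest exceed `(k - 1) (p k² - 1)`, so `p k²` of them meet at one point. -/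
def edgeDegreeBound (k p : ℕ) : ℕ := (k - 1) * (p * k ^ 2 - 1) + p * (k - 1) ^ 2 + 1

theorem edgeDegreeBound_le {k p : ℕ} (hk : 2 ≤ k) (hp : 1 ≤ p) :
    (edgeDegreeBound k p : ℤ) ≤ p * k ^ 3 + (p - 3) * k + 1 := by
  have hpk : 1 ≤ p * k ^ 2 := Nat.one_le_iff_ne_zero.2 (by positivity)
  unfold edgeDegreeBound
  push_cast [Nat.cast_sub (show 1 ≤ k by omega), Nat.cast_sub hpk]
  have hp' : (1 : ℤ) ≤ p := by exact_mod_cast hp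
  have hk' : (2 : ℤ) ≤ k := by exact_mod_cast hk
  nlinarith [mul_nonneg (sub_nonneg.2 hp') (sub_nonneg.2 hk')]

namespace LineRep

variable [DecidableEq α] {k p : ℕ} {G : SimpleGraph V} {W : Set V} (R : LineRep k p G W α)

theorem isClique_of_forall_mem {B : Finset V} (hB : ↑B ⊆ W) {x : α}
    (hx : ∀ b ∈ B, x ∈ R.edge b) : G.IsClique (B : Set V) := fun a ha b hb hab =>
  (R.adj_iff a (hB ha) b (hB hb)).2 ⟨hab, x, mem_inter.2 ⟨hx a ha, hx b hb⟩⟩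

theorem card_inter_edge_lt {u v : V} (hu : u ∈ W) (hv : v ∈ W) (huv : u ≠ v) :
    #(R.edge u ∩ R.edge v) < k := by
  by_contra! h
  have hu' : R.edge u ∩ R.edge v = R.edge u :=
    eq_of_subset_of_card_le inter_subset_left (by rwa [R.card_edge u hu])
  have hv' : R.edge v ∩ R.edge u = R.edge v :=
    eq_of_subset_of_card_le inter_subset_left (by rwa [inter_comm, R.card_edge v hv])
  exact huv (R.injOn_edge hu hv (by rw [← hu', inter_comm, hv']))

theorem card_le_of_forall_mem_inter_nonempty {x : α} {g : V} (hg : g ∈ W) (hxg : x ∉ R.edge g)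
    {A : Finset V} (hA : ↑A ⊆ W) (hAx : ∀ a ∈ A, x ∈ R.edge a)
    (hAg : ∀ a ∈ A, (R.edge a ∩ R.edge g).Nonempty) : #A ≤ k * p := by
  rw [← R.card_edge g hg]
  refine card_le_mul_of_forall_inter_nonempty hAg fun y hy => ?_
  refine R.card_le_of_mem_edge x y (by rintro rfl; exact hxg hy) _
    ((coe_subset.2 (filter_subset _ _)).trans hA) fun a ha => ?_
  obtain ⟨ha, hya⟩ := mem_filter.1 ha
  exact ⟨hAx a ha, hya⟩

theorem exists_forall_mem_edge_of_isClique [DecidableEq V] {B : Finset V} (hB : ↑B ⊆ W)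
    (hBc : G.IsClique (B : Set V)) (hcard : p * k ^ 2 + 2 ≤ #B) :
    ∃ x, ∀ b ∈ B, x ∈ R.edge b := by
  have hmeet : ∀ a ∈ B, ∀ b ∈ B, a ≠ b → (R.edge a ∩ R.edge b).Nonempty := fun a ha b hb hab =>
    ((R.adj_iff a (hB ha) b (hB hb)).1 (hBc ha hb hab)).2
  obtain ⟨b₀, hb₀⟩ : B.Nonempty := card_pos.1 (by omega)
  -- pigeonhole over the `k` points of `edge b₀`
  obtain ⟨x, -, hx⟩ : ∃ x ∈ R.edge b₀, k * p < #{b ∈ B.erase b₀ | x ∈ R.edge b} := by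
    by_contra! h
    have := card_le_mul_of_forall_inter_nonempty
      (fun b hb => hmeet b (mem_of_mem_erase hb) b₀ hb₀ (ne_of_mem_erase hb)) h
    rw [card_erase_of_mem hb₀, R.card_edge b₀ (hB hb₀)] at this
    have : k * (k * p) = p * k ^ 2 := by ring
    omega
  refine ⟨x, fun g hg => ?_⟩
  by_contra hxg
  refine (R.card_le_of_forall_mem_inter_nonempty (hB hg) hxg (A := {b ∈ B.erase b₀ | x ∈ R.edge b})
    ?_ (fun a ha => (mem_filter.1 ha).2) fun a ha => ?_).not_gt hx
  · exact (coe_subset.2 ((filter_subset _ _).trans (erase_subset _ _))).trans hB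
  · obtain ⟨ha, hxa⟩ := mem_filter.1 ha
    exact hmeet a (mem_of_mem_erase ha) g hg (by rintro rfl; exact hxg hxa)

theorem card_le_mul_mul_of_forall_inter_nonempty {t₁ t₂ : Finset α} (ht : Disjoint t₁ t₂)
    {s : Finset V} (hs : ↑s ⊆ W) (h₁ : ∀ w ∈ s, (R.edge w ∩ t₁).Nonempty)
    (h₂ : ∀ w ∈ s, (R.edge w ∩ t₂).Nonempty) : #s ≤ #t₁ * (#t₂ * p) := by
  refine card_le_mul_of_forall_inter_nonempty h₁ fun y hy =>
    card_le_mul_of_forall_inter_nonempty (fun w hw => h₂ w (mem_filter.1 hw).1) fun z hz => ?_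
  rw [filter_filter]
  refine R.card_le_of_mem_edge y z (by rintro rfl; exact disjoint_left.1 ht hy hz) _
    ((coe_subset.2 (filter_subset _ _)).trans hs) fun w hw => ?_
  exact (mem_filter.1 hw).2

theorem inter_sdiff_nonempty {a b w : V} (ha : a ∈ W) (hw : w ∈ W) (hwa : G.Adj w a)
    (hwab : ¬(R.edge w ∩ (R.edge a ∩ R.edge b)).Nonempty) :
    (R.edge w ∩ (R.edge a \ R.edge b)).Nonempty := by
  obtain ⟨-, y, hy⟩ := (R.adj_iff w hw a ha).1 hwa
  obtain ⟨hyw, hya⟩ := mem_inter.1 hy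
  exact ⟨y, mem_inter.2 ⟨hyw, mem_sdiff.2 ⟨hya, fun hyb =>
    hwab ⟨y, mem_inter.2 ⟨hyw, mem_inter.2 ⟨hya, hyb⟩⟩⟩⟩⟩⟩

theorem card_filter_not_inter_nonempty_le {u v : V} (hu : u ∈ W) (hv : v ∈ W) (huv : u ≠ v)
    (hI : (R.edge u ∩ R.edge v).Nonempty) {S : Finset V} (hS : ↑S ⊆ W)
    (hSuv : ∀ w ∈ S, G.Adj u w ∧ G.Adj v w) :
    #{w ∈ S | ¬(R.edge w ∩ (R.edge u ∩ R.edge v)).Nonempty} ≤ (k - 1) * ((k - 1) * p) := by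
  have hIk := R.card_inter_edge_lt hu hv huv
  have hIpos := card_pos.2 hI
  have hdu := card_sdiff_add_card_inter (R.edge u) (R.edge v)
  have hdv := card_sdiff_add_card_inter (R.edge v) (R.edge u)
  rw [R.card_edge u hu] at hdu
  rw [R.card_edge v hv, inter_comm] at hdv
  have hdu' : #(R.edge u \ R.edge v) ≤ k - 1 := by omega
  have hdv' : #(R.edge v \ R.edge u) ≤ k - 1 := by omega
  refine (R.card_le_mul_mul_of_forall_inter_nonempty disjoint_sdiff_sdiff
    ((coe_subset.2 (filter_subset _ _)).trans hS) (fun w hw => ?_) (fun w hw => ?_)).trans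
    (Nat.mul_le_mul hdu' (Nat.mul_le_mul_right p hdv'))
  all_goals obtain ⟨hwS, hwI⟩ := mem_filter.1 hw
  · exact R.inter_sdiff_nonempty hu (hS hwS) (hSuv w hwS).1.symm hwI
  · exact R.inter_sdiff_nonempty hv (hS hwS) (hSuv w hwS).2.symm (by rwa [inter_comm (R.edge v)])

theorem exists_mem_inter_le_card_filter {u v : V} (hu : u ∈ W) (hv : v ∈ W) (huv : G.Adj u v)
    {S : Finset V} (hS : ↑S ⊆ W) (hSuv : ∀ w ∈ S, G.Adj u w ∧ G.Adj v w)
    (hcard : edgeDegreeBound k p ≤ #S) :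
    ∃ x ∈ R.edge u ∩ R.edge v, p * k ^ 2 ≤ #{w ∈ S | x ∈ R.edge w} := by
  obtain ⟨hne, hI⟩ := (R.adj_iff u hu v hv).1 huv
  have hcross := R.card_filter_not_inter_nonempty_le hu hv hne hI hS hSuv
  have hIk := R.card_inter_edge_lt hu hv hne
  by_contra! hfew
  have hcore : #{w ∈ S | (R.edge w ∩ (R.edge u ∩ R.edge v)).Nonempty} ≤
      #(R.edge u ∩ R.edge v) * (p * k ^ 2 - 1) :=
    card_le_mul_of_forall_inter_nonempty (fun w hw => (mem_filter.1 hw).2) fun y hy => by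
      have := card_le_card (filter_subset_filter (fun w => y ∈ R.edge w)
        (filter_subset (fun w => (R.edge w ∩ (R.edge u ∩ R.edge v)).Nonempty) S))
      have := hfew y hy
      omega
  have hsplit := card_filter_add_card_filter_not (s := S)
    fun w => (R.edge w ∩ (R.edge u ∩ R.edge v)).Nonempty
  have := Nat.mul_le_mul_right (p * k ^ 2 - 1) (show #(R.edge u ∩ R.edge v) ≤ k - 1 by omega)
  have : p * (k - 1) ^ 2 = (k - 1) * ((k - 1) * p) := by ring
  unfold edgeDegreeBound at hcard
  omega

end LineRep

/-- Room for an edge with its common neighbours, and for `k + 1` cliques of size `p k² + 2`. -/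
def localBound (k p : ℕ) : ℕ := edgeDegreeBound k p + 2 + (k + 1) * (p * k ^ 2 + 2)

def IsLocallyLineGraph (k p C : ℕ) (G : SimpleGraph V) : Prop :=
  ∀ W : Finset V, #W ≤ C → IsLineGraph k p (G.induce (W : Set V))

def IsBigMaximalClique (k p : ℕ) (G : SimpleGraph V) (Q : Finset V) : Prop :=
  Maximal (fun s : Finset V => G.IsClique (s : Set V)) Q ∧ p * k ^ 2 + 2 ≤ #Q

variable {k p : ℕ} {G : SimpleGraph V}

theorem IsLocallyLineGraph.exists_lineRep {C : ℕ} (hG : IsLocallyLineGraph k p C G)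
    {W : Finset V} (hW : #W ≤ C) : ∃ nX, Nonempty (LineRep k p G W (Fin nX)) := by
  obtain ⟨nX, ⟨R⟩⟩ := (hG W hW).exists_lineRep
  exact ⟨nX, ⟨R.ofInduce⟩⟩

theorem exists_isBigMaximalClique_superset [Finite V] {B : Finset V}
    (hB : G.IsClique (B : Set V)) (hcard : p * k ^ 2 + 2 ≤ #B) :
    ∃ Q, B ⊆ Q ∧ IsBigMaximalClique k p G Q := by
  obtain ⟨Q, hBQ, hQ⟩ :=
    Finite.exists_le_maximal (p := fun s : Finset V => G.IsClique (s : Set V)) hB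
  exact ⟨Q, hBQ, hQ, hcard.trans (card_le_card hBQ)⟩

theorem IsLocallyLineGraph.exists_isBigMaximalClique_of_adj [Fintype V] [DecidableEq V]
    [DecidableRel G.Adj] (hG : IsLocallyLineGraph k p (localBound k p) G)
    (hdeg : ∀ u v, G.Adj u v → edgeDegreeBound k p ≤ #{w | G.Adj u w ∧ G.Adj v w})
    {u v : V} (huv : G.Adj u v) : ∃ Q, IsBigMaximalClique k p G Q ∧ u ∈ Q ∧ v ∈ Q := by
  obtain ⟨S, hS, hSc⟩ := exists_subset_card_eq (hdeg u v huv)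
  have hSuv : ∀ w ∈ S, G.Adj u w ∧ G.Adj v w := fun w hw => (mem_filter.1 (hS hw)).2
  have hSW : S ⊆ insert u (insert v S) := (subset_insert _ _).trans (subset_insert _ _)
  obtain ⟨nX, ⟨R⟩⟩ := hG.exists_lineRep (W := insert u (insert v S)) (by
    have := card_insert_le u (insert v S)
    have := card_insert_le v S
    unfold localBound
    omega)
  obtain ⟨x, hx, hxS⟩ := R.exists_mem_inter_le_card_filter (by simp) (by simp) huv
    (coe_subset.2 hSW) hSuv hSc.ge
  set B := insert u (insert v {w ∈ S | x ∈ R.edge w})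
  have hBx : ∀ b ∈ B, x ∈ R.edge b := by
    simp only [B, mem_insert, mem_filter]
    rintro b (rfl | rfl | ⟨-, hb⟩)
    exacts [(mem_inter.1 hx).1, (mem_inter.1 hx).2, hb]
  have hBc : p * k ^ 2 + 2 ≤ #B := by
    have hvS : v ∉ {w ∈ S | x ∈ R.edge w} := fun h => G.irrefl (hSuv v (mem_filter.1 h).1).2
    have huS : u ∉ insert v {w ∈ S | x ∈ R.edge w} := by
      rw [mem_insert]
      rintro (rfl | h)
      exacts [G.irrefl huv, G.irrefl (hSuv u (mem_filter.1 h).1).1]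
    rw [card_insert_of_notMem huS, card_insert_of_notMem hvS]
    omega
  obtain ⟨Q, hBQ, hQ⟩ := exists_isBigMaximalClique_superset
    (R.isClique_of_forall_mem (coe_subset.2 (insert_subset_insert _
      (insert_subset_insert _ (filter_subset _ _)))) hBx) hBc
  exact ⟨Q, hQ, hBQ (mem_insert_self _ _), hBQ (mem_insert_of_mem (mem_insert_self _ _))⟩

theorem IsLocallyLineGraph.adj_of_lt_card_inter [DecidableEq V] (hk : 1 ≤ k)
    (hG : IsLocallyLineGraph k p (localBound k p) G) {Q Q' : Finset V}
    (hQ : G.IsClique (Q : Set V)) (hQ' : G.IsClique (Q' : Set V)) (hQc : p * k ^ 2 + 2 ≤ #Q)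
    (hQc' : p * k ^ 2 + 2 ≤ #Q') (hQQ' : p < #(Q ∩ Q')) {u v : V} (hu : u ∈ Q) (hv : v ∈ Q')
    (huv : u ≠ v) : G.Adj u v := by
  obtain ⟨S, hS, hSc⟩ := exists_subset_card_eq (show p + 1 ≤ #(Q ∩ Q') by omega)
  have hpk : p ≤ p * k ^ 2 := Nat.le_mul_of_pos_right p (by positivity)
  obtain ⟨Q₁, huS, hQ₁, hQ₁c⟩ := exists_subsuperset_card_eq
    (insert_subset hu (hS.trans inter_subset_left)) ((card_insert_le u S).trans (by omega)) hQc
  obtain ⟨Q₂, hvS, hQ₂, hQ₂c⟩ := exists_subsuperset_card_eq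
    (insert_subset hv (hS.trans inter_subset_right)) ((card_insert_le v S).trans (by omega)) hQc'
  obtain ⟨nX, ⟨R⟩⟩ := hG.exists_lineRep (W := Q₁ ∪ Q₂) (by
    have := card_union_le Q₁ Q₂
    have := Nat.mul_le_mul_right (p * k ^ 2 + 2) (show 2 ≤ k + 1 by omega)
    unfold localBound
    omega)
  obtain ⟨x, hx⟩ := R.exists_forall_mem_edge_of_isClique (coe_subset.2 subset_union_left)
    (hQ.subset (coe_subset.2 hQ₁)) hQ₁c.ge
  obtain ⟨y, hy⟩ := R.exists_forall_mem_edge_of_isClique (coe_subset.2 subset_union_right)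
    (hQ'.subset (coe_subset.2 hQ₂)) hQ₂c.ge
  -- the `p + 1` common vertices force the two cliques onto the same point
  obtain rfl : x = y := by
    by_contra hxy
    have := R.card_le_of_mem_edge x y hxy S
      (coe_subset.2 (((subset_insert u S).trans huS).trans subset_union_left))
      fun w hw => ⟨hx w (huS (mem_insert_of_mem hw)), hy w (hvS (mem_insert_of_mem hw))⟩
    omega
  exact (R.adj_iff u (mem_union_left _ (huS (mem_insert_self u S))) v
    (mem_union_right _ (hvS (mem_insert_self v S)))).2
    ⟨huv, x, mem_inter.2 ⟨hx u (huS (mem_insert_self u S)), hy v (hvS (mem_insert_self v S))⟩⟩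

theorem IsBigMaximalClique.eq_of_lt_card_inter [DecidableEq V] (hk : 1 ≤ k)
    (hG : IsLocallyLineGraph k p (localBound k p) G) {Q Q' : Finset V}
    (hQ : IsBigMaximalClique k p G Q) (hQ' : IsBigMaximalClique k p G Q')
    (hQQ' : p < #(Q ∩ Q')) : Q = Q' := by
  have hunion : G.IsClique ((Q ∪ Q' : Finset V) : Set V) := by
    rw [coe_union, IsClique, Set.pairwise_union]
    refine ⟨hQ.1.prop, hQ'.1.prop, fun a ha b hb hab => ?_⟩
    exact ⟨hG.adj_of_lt_card_inter hk hQ.1.prop hQ'.1.prop hQ.2 hQ'.2 hQQ' ha hb hab,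
      hG.adj_of_lt_card_inter hk hQ'.1.prop hQ.1.prop hQ'.2 hQ.2 (by rwa [inter_comm]) hb ha
        hab.symm⟩
  have hQ'' : G.IsClique ((Q' ∪ Q : Finset V) : Set V) := by rwa [union_comm]
  exact (hQ.1.eq_of_le hunion subset_union_left).trans
    ((union_comm Q Q').trans (hQ'.1.eq_of_le hQ'' subset_union_left).symm)

theorem IsBigMaximalClique.eq_of_isClique_union [Fintype V] [DecidableEq V] (hk : 1 ≤ k)
    (hG : IsLocallyLineGraph k p (localBound k p) G) {Q Q' S S' : Finset V}
    (hQ : IsBigMaximalClique k p G Q) (hQ' : IsBigMaximalClique k p G Q') (hS : S ⊆ Q)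
    (hS' : S' ⊆ Q') (hSc : p * k ^ 2 + 2 ≤ #S) (hSc' : p * k ^ 2 + 2 ≤ #S')
    (hSS' : G.IsClique ((S ∪ S' : Finset V) : Set V)) : Q = Q' := by
  have hpk : p ≤ p * k ^ 2 := Nat.le_mul_of_pos_right p (by positivity)
  obtain ⟨M, hM, hMbig⟩ := exists_isBigMaximalClique_superset hSS'
    (hSc.trans (card_le_card subset_union_left))
  have hQM : Q = M := hQ.eq_of_lt_card_inter hk hG hMbig <| (show p < #S by omega).trans_le
    (card_le_card (subset_inter hS (subset_union_left.trans hM)))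
  have hQ'M : Q' = M := hQ'.eq_of_lt_card_inter hk hG hMbig <| (show p < #S' by omega).trans_le
    (card_le_card (subset_inter hS' (subset_union_right.trans hM)))
  rw [hQM, hQ'M]

/-- The hyperedges of the vertices of each clique in `QS` share a point, which then lies in all
hyperedges of `U`; two cliques with the same point would merge. -/
theorem IsLocallyLineGraph.exists_lineRep_card_le_card_inf [Fintype V] [DecidableEq V]
    (hk : 1 ≤ k) (hG : IsLocallyLineGraph k p (localBound k p) G) {U : Finset V}
    (hU : #U ≤ p * k ^ 2 + 2) {QS : Finset (Finset V)} (hne : QS.Nonempty)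
    (hQS : ∀ Q ∈ QS, IsBigMaximalClique k p G Q ∧ U ⊆ Q) (hcard : #QS ≤ k + 1) :
    ∃ nX, ∃ R : LineRep k p G U (Fin nX), #QS ≤ #(U.inf R.edge) := by
  choose! σ hUσ hσQ hσc using fun Q hQ =>
    exists_subsuperset_card_eq (hQS Q hQ).2 hU (hQS Q hQ).1.2
  obtain ⟨nX, ⟨R⟩⟩ := hG.exists_lineRep (W := QS.biUnion σ) (by
    have := card_biUnion_le_card_mul QS σ _ fun Q hQ => (hσc Q hQ).le
    have := Nat.mul_le_mul_right (p * k ^ 2 + 2) hcard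
    unfold localBound
    omega)
  have hσW : ∀ Q ∈ QS, σ Q ⊆ QS.biUnion σ := fun Q hQ => subset_biUnion_of_mem σ hQ
  obtain ⟨Q₀, hQ₀⟩ := hne
  have hUW : U ⊆ QS.biUnion σ := (hUσ Q₀ hQ₀).trans (hσW Q₀ hQ₀)
  have hpt : ∀ Q ∈ QS, ∃ x, ∀ b ∈ σ Q, x ∈ R.edge b := fun Q hQ =>
    R.exists_forall_mem_edge_of_isClique (coe_subset.2 (hσW Q hQ))
      ((hQS Q hQ).1.1.prop.subset (coe_subset.2 (hσQ Q hQ))) (hσc Q hQ).ge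
  have : Nonempty (Fin nX) := ⟨(hpt Q₀ hQ₀).choose⟩
  choose! f hf using hpt
  refine ⟨nX, R.mono (coe_subset.2 hUW), card_le_card_of_injOn f (fun Q hQ => ?_) ?_⟩
  · exact mem_inf.2 fun u hu => hf Q hQ u (hUσ Q hQ hu)
  · intro Q₁ hQ₁ Q₂ hQ₂ h
    refine (hQS Q₁ hQ₁).1.eq_of_isClique_union hk hG (hQS Q₂ hQ₂).1 (hσQ Q₁ hQ₁) (hσQ Q₂ hQ₂)
      (hσc Q₁ hQ₁).ge (hσc Q₂ hQ₂).ge (R.isClique_of_forall_mem (x := f Q₁)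
        (coe_subset.2 (union_subset (hσW Q₁ hQ₁) (hσW Q₂ hQ₂))) fun b hb => ?_)
    rcases mem_union.1 hb with hb | hb
    exacts [hf Q₁ hQ₁ b hb, h ▸ hf Q₂ hQ₂ b hb]

open Classical in
noncomputable def bigCliquesAt [Fintype V] (k p : ℕ) (G : SimpleGraph V) (u : V) :
    Finset (Finset V) :=
  {Q | IsBigMaximalClique k p G Q ∧ u ∈ Q}

theorem mem_bigCliquesAt [Fintype V] {u : V} {Q : Finset V} :
    Q ∈ bigCliquesAt k p G u ↔ IsBigMaximalClique k p G Q ∧ u ∈ Q := by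
  simp [bigCliquesAt]

theorem IsLocallyLineGraph.card_bigCliquesAt_le [Fintype V] [DecidableEq V] (hk : 1 ≤ k)
    (hG : IsLocallyLineGraph k p (localBound k p) G) (u : V) : #(bigCliquesAt k p G u) ≤ k := by
  by_contra! h
  obtain ⟨QS, hQS, hc⟩ := exists_subset_card_eq (show k + 1 ≤ #(bigCliquesAt k p G u) by omega)
  obtain ⟨nX, R, hR⟩ := hG.exists_lineRep_card_le_card_inf hk (U := {u}) (QS := QS) (by simp)
    (card_pos.1 (by omega)) (fun Q hQ => by simpa using mem_bigCliquesAt.1 (hQS hQ)) hc.le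
  rw [inf_singleton, R.card_edge u (mem_singleton_self u)] at hR
  omega

theorem IsLocallyLineGraph.card_inter_bigCliquesAt_lt [Fintype V] [DecidableEq V]
    (hk : 1 ≤ k) (hG : IsLocallyLineGraph k p (localBound k p) G) {u v : V} (huv : u ≠ v) :
    #(bigCliquesAt k p G u ∩ bigCliquesAt k p G v) < k := by
  by_contra! h
  obtain ⟨QS, hQS, hc⟩ := exists_subset_card_eq h
  obtain ⟨nX, R, hR⟩ := hG.exists_lineRep_card_le_card_inf hk (U := {u, v}) (QS := QS)
    (card_le_two.trans (by omega)) (card_pos.1 (by omega)) (fun Q hQ => by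
      obtain ⟨hu, hv⟩ := mem_inter.1 (hQS hQ)
      exact ⟨(mem_bigCliquesAt.1 hu).1, insert_subset (mem_bigCliquesAt.1 hu).2
        (singleton_subset_iff.2 (mem_bigCliquesAt.1 hv).2)⟩) (by omega)
  rw [inf_insert, inf_singleton, inf_eq_inter] at hR
  have := R.card_inter_edge_lt (by simp) (by simp) huv
  omega

noncomputable def cliqueEdge [Fintype V] (k p : ℕ) (G : SimpleGraph V) (u : V) :
    Finset (Finset V ⊕ V × Fin k) :=
  (bigCliquesAt k p G u).disjSum
    ({u} ×ˢ univ.map (Fin.castLEEmb (k.sub_le #(bigCliquesAt k p G u))))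

section cliqueEdge

variable [Fintype V] {u v : V}

theorem inl_mem_cliqueEdge {Q : Finset V} :
    Sum.inl Q ∈ cliqueEdge k p G u ↔ Q ∈ bigCliquesAt k p G u :=
  inl_mem_disjSum

theorem eq_of_inr_mem_cliqueEdge {w : V} {i : Fin k} (h : Sum.inr (w, i) ∈ cliqueEdge k p G u) :
    w = u := by
  simp only [cliqueEdge, inr_mem_disjSum, mem_product, mem_singleton] at h
  exact h.1

theorem card_cliqueEdge (h : #(bigCliquesAt k p G u) ≤ k) : #(cliqueEdge k p G u) = k := by
  simp only [cliqueEdge, card_disjSum, card_product, card_singleton, card_map, card_univ,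
    Fintype.card_fin]
  omega

variable [DecidableEq V]

theorem cliqueEdge_injective (hk : 1 ≤ k) (hG : IsLocallyLineGraph k p (localBound k p) G) :
    Function.Injective (cliqueEdge k p G) := by
  intro u v h
  by_contra huv
  have hlt := hG.card_inter_bigCliquesAt_lt hk huv
  have hsame : bigCliquesAt k p G u = bigCliquesAt k p G v := by
    ext Q
    rw [← inl_mem_cliqueEdge, h, inl_mem_cliqueEdge]
  rw [hsame, inter_self] at hlt
  -- as `v` lies in fewer than `k` big maximal cliques, `cliqueEdge v` contains a private point
  obtain ⟨⟨w, i⟩, hwi⟩ :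
      ({v} ×ˢ univ.map (Fin.castLEEmb (k.sub_le #(bigCliquesAt k p G v)))).Nonempty := by
    rw [← card_pos, card_product, card_singleton, card_map, card_univ, Fintype.card_fin]
    omega
  have hu : Sum.inr (w, i) ∈ cliqueEdge k p G u := h ▸ inr_mem_disjSum.2 hwi
  exact huv ((eq_of_inr_mem_cliqueEdge hu).symm.trans (mem_singleton.1 (mem_product.1 hwi).1))

theorem card_le_of_mem_cliqueEdge (hk : 1 ≤ k) (hp : 1 ≤ p)
    (hG : IsLocallyLineGraph k p (localBound k p) G) {x y : Finset V ⊕ V × Fin k} (hxy : x ≠ y)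
    {s : Finset V} (hs : ∀ v ∈ s, x ∈ cliqueEdge k p G v ∧ y ∈ cliqueEdge k p G v) : #s ≤ p := by
  have hprivate : ∀ {w : V} {i : Fin k}, (∀ v ∈ s, Sum.inr (w, i) ∈ cliqueEdge k p G v) →
      #s ≤ p := fun h => (card_le_one.2 fun a ha b hb =>
    (eq_of_inr_mem_cliqueEdge (h a ha)).symm.trans (eq_of_inr_mem_cliqueEdge (h b hb))).trans hp
  rcases x with Q | ⟨w, i⟩
  · rcases y with Q' | ⟨w, i⟩
    · rcases s.eq_empty_or_nonempty with rfl | ⟨v₀, hv₀⟩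
      · simp
      have hmem : ∀ v ∈ s, (IsBigMaximalClique k p G Q ∧ v ∈ Q) ∧
          (IsBigMaximalClique k p G Q' ∧ v ∈ Q') := fun v hv =>
        ⟨mem_bigCliquesAt.1 (inl_mem_cliqueEdge.1 (hs v hv).1),
          mem_bigCliquesAt.1 (inl_mem_cliqueEdge.1 (hs v hv).2)⟩
      by_contra! hps
      refine hxy (congrArg Sum.inl ((hmem v₀ hv₀).1.1.eq_of_lt_card_inter hk hG (hmem v₀ hv₀).2.1
        (hps.trans_le (card_le_card fun v hv => mem_inter.2 ⟨(hmem v hv).1.2, (hmem v hv).2.2⟩))))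
    · exact hprivate fun v hv => (hs v hv).2
  · exact hprivate fun v hv => (hs v hv).1

theorem adj_iff_cliqueEdge [DecidableRel G.Adj] (hG : IsLocallyLineGraph k p (localBound k p) G)
    (hdeg : ∀ u v, G.Adj u v → edgeDegreeBound k p ≤ #{w | G.Adj u w ∧ G.Adj v w}) :
    G.Adj u v ↔ u ≠ v ∧ (cliqueEdge k p G u ∩ cliqueEdge k p G v).Nonempty := by
  constructor
  · intro huv
    obtain ⟨Q, hQ, hu, hv⟩ := hG.exists_isBigMaximalClique_of_adj hdeg huv
    exact ⟨G.ne_of_adj huv, Sum.inl Q, mem_inter.2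
      ⟨inl_mem_cliqueEdge.2 (mem_bigCliquesAt.2 ⟨hQ, hu⟩),
        inl_mem_cliqueEdge.2 (mem_bigCliquesAt.2 ⟨hQ, hv⟩)⟩⟩
  · rintro ⟨huv, z, hz⟩
    obtain ⟨hzu, hzv⟩ := mem_inter.1 hz
    rcases z with Q | ⟨w, i⟩
    · obtain ⟨hQ, hu⟩ := mem_bigCliquesAt.1 (inl_mem_cliqueEdge.1 hzu)
      exact hQ.1.prop hu (mem_bigCliquesAt.1 (inl_mem_cliqueEdge.1 hzv)).2 huv
    · exact absurd ((eq_of_inr_mem_cliqueEdge hzu).symm.trans (eq_of_inr_mem_cliqueEdge hzv)) huv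

end cliqueEdge

theorem IsLocallyLineGraph.isLineGraph [Fintype V] [DecidableEq V] [DecidableRel G.Adj]
    (hk : 1 ≤ k) (hp : 1 ≤ p) (hG : IsLocallyLineGraph k p (localBound k p) G)
    (hdeg : ∀ u v, G.Adj u v → edgeDegreeBound k p ≤ #{w | G.Adj u w ∧ G.Adj v w}) :
    IsLineGraph k p G :=
  isLineGraph_of_lineRep
    { edge := cliqueEdge k p G
      card_edge := fun v _ => card_cliqueEdge (hG.card_bigCliquesAt_le hk v)
      injOn_edge := (cliqueEdge_injective hk hG).injOn
      card_le_of_mem_edge := fun _ _ hxy _ _ hs => card_le_of_mem_cliqueEdge hk hp hG hxy hs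
      adj_iff := fun _ _ _ _ => adj_iff_cliqueEdge hG hdeg }

end HypergraphLineGraph

open HypergraphLineGraph

/-- Main theorem: for every `k ≥ 2`, `p ≥ 1` there is a finite family of forbidden
graphs `ℱ(k,p)` such that a graph with minimum edge-degree (triangles per edge) at
least `p·k³ + (p−3)·k + 1` is the line graph of a `k`-uniform hypergraph with
multiplicity at most `p` iff it has no induced subgraph isomorphic to a member of
`ℱ(k,p)`. -/
theorem finite_forbidden_characterization (k p : ℕ) (hk : 2 ≤ k) (hp : 1 ≤ p) :
    ∃ (m : ℕ) (nF : Fin m → ℕ) (F : ∀ i : Fin m, SimpleGraph (Fin (nF i))),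
      ∀ (n : ℕ) (G : SimpleGraph (Fin n)) (_ : DecidableRel G.Adj),
        (∀ u v : Fin n, G.Adj u v →
          (p : ℤ) * k ^ 3 + ((p : ℤ) - 3) * k + 1 ≤
            ((Finset.univ.filter (fun w => G.Adj u w ∧ G.Adj v w)).card : ℤ)) →
        ((∃ (nX : ℕ) (H : Finset (Finset (Fin nX))),
            (∀ e ∈ H, e.card = k) ∧
            (∀ x y : Fin nX, x ≠ y → (H.filter (fun e => x ∈ e ∧ y ∈ e)).card ≤ p) ∧
            ∃ φ : Fin n ≃ {e // e ∈ H},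
              ∀ u v : Fin n, G.Adj u v ↔
                (u ≠ v ∧ ((φ u : Finset (Fin nX)) ∩ (φ v : Finset (Fin nX))).Nonempty))
          ↔
          ¬ ∃ (i : Fin m) (s : Set (Fin n)),
              Nonempty ((F i) ≃g (G.induce s))) := by
  -- the forbidden graphs: all non-line graphs on at most `localBound k p` vertices
  let ι := {A : Σ j : Fin (localBound k p + 1), SimpleGraph (Fin j) // ¬IsLineGraph k p A.2}
  let e := (Finite.equivFin ι).symm
  refine ⟨Nat.card ι, fun i => (e i).1.1, fun i => (e i).1.2, fun n G _ hdeg => ?_⟩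
  change IsLineGraph k p G ↔ _
  constructor
  · rintro hG ⟨i, s, ⟨φ⟩⟩
    exact (e i).2 (hG.of_embedding ((SimpleGraph.Embedding.induce s).comp φ.toEmbedding))
  · intro hfree
    refine IsLocallyLineGraph.isLineGraph (by omega) hp (fun W hW => ?_) fun u v huv => ?_
    · by_contra hW'
      let ψ : (G.induce (W : Set (Fin n))).comap W.equivFin.symm ≃g G.induce (W : Set (Fin n)) :=
        ⟨W.equivFin.symm, Iff.rfl⟩
      obtain ⟨i, hi⟩ := e.surjective
        ⟨⟨⟨W.card, by omega⟩, _⟩, fun hA => hW' (hA.of_embedding ψ.symm.toEmbedding)⟩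
      exact hfree ⟨i, W, by beta_reduce; rw [hi]; exact ⟨ψ⟩⟩
    · exact_mod_cast (edgeDegreeBound_le hk hp).trans (hdeg u v huv)
end
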